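/- arXiv:2201.10158 — 9 statements merged into one kernel-verified Lean document; each statement's English description precedes it below -/
import Mathlib

section
/- Let d ≥ 1 and p ∈ (0,2). For all x, z ∈ ℝ^d with 2|z| ≤ |x| one has |V_p(x+z) + V_p(x−z) − 2 V_p(x)| ≤ 3p |z|² (1 + |x|²/4)^{p/2 − 1}. -/
open Real
open scoped RealInnerProductSpace

/-! Along the line `t ↦ x + t • z`, the function `f t = V_p (x + t • z)` has
`f'' = p q^(p/2 - 2) (‖z‖² q + (p - 2) ⟪x + t • z, z⟫²)` with `q = 1 + ‖x + t • z‖²`. By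
Cauchy–Schwarz `0 ≤ ⟪x + t • z, z⟫² ≤ ‖z‖² q`, so `|f''| ≤ p ‖z‖² q^(p/2 - 1)` because `|p - 1| ≤ 1`.
For `|t| ≤ 1` we have `‖x + t • z‖ ≥ ‖x‖ / 2`, hence `q^(p/2 - 1) ≤ (1 + ‖x‖²/4)^(p/2 - 1)` since the
exponent is negative, and the second difference `f 1 + f (-1) - 2 f 0` is bounded by `sup |f''|`. -/

open Set in
theorem norm_add_sub_two_smul_le_of_norm_deriv_deriv_le {E : Type*} [NormedAddCommGroup E]
    [NormedSpace ℝ E] {f f' f'' : ℝ → E} {r M : ℝ} (hr : 0 ≤ r)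
    (hf : ∀ t ∈ Icc (-r) r, HasDerivAt f (f' t) t)
    (hf' : ∀ t ∈ Icc (-r) r, HasDerivAt f' (f'' t) t)
    (bound : ∀ t ∈ Icc (-r) r, ‖f'' t‖ ≤ M) :
    ‖f r + f (-r) - (2 : ℝ) • f 0‖ ≤ M * r ^ 2 := by
  have mem : ∀ t ∈ Icc 0 r, t ∈ Icc (-r) r ∧ -t ∈ Icc (-r) r := fun t ht =>
    ⟨⟨by linarith [ht.1], ht.2⟩, ⟨by linarith [ht.2], by linarith [ht.1]⟩⟩
  have hF : ∀ t ∈ Icc 0 r,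
      HasDerivAt (fun t => f t + f (-t) - (2 : ℝ) • f 0) (f' t - f' (-t)) t := fun t ht => by
    have := ((hf t (mem t ht).1).add ((hf (-t) (mem t ht).2).scomp t (hasDerivAt_neg t))).sub_const
      ((2 : ℝ) • f 0)
    simpa [sub_eq_add_neg] using this
  have hF'_le : ∀ t ∈ Icc 0 r, ‖f' t - f' (-t)‖ ≤ M * (2 * t) := fun t ht => by
    have := (convex_Icc (-r) r).norm_image_sub_le_of_norm_hasDerivWithin_le
      (fun s hs => (hf' s hs).hasDerivWithinAt) bound (mem t ht).2 (mem t ht).1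
    rwa [Real.norm_eq_abs, sub_neg_eq_add, ← two_mul, abs_of_nonneg (by linarith [ht.1])] at this
  have hB : ∀ t, HasDerivAt (fun t => M * t ^ 2) (M * (2 * t)) t := fun t => by
    simpa using (hasDerivAt_pow 2 t).const_mul M
  refine image_norm_le_of_norm_deriv_right_le_deriv_boundary
    (fun t ht => (hF t ht).continuousAt.continuousWithinAt)
    (fun t ht => (hF t (Ico_subset_Icc_self ht)).hasDerivWithinAt) (by simp [two_smul]) hB
    (fun t ht => hF'_le t (Ico_subset_Icc_self ht)) (right_mem_Icc.2 hr)

section Line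

variable {E : Type*} [NormedAddCommGroup E] [InnerProductSpace ℝ E] (x z : E) (s : ℝ)

theorem hasDerivAt_one_add_norm_sq_line (t : ℝ) :
    HasDerivAt (fun t : ℝ => 1 + ‖x + t • z‖ ^ 2) (2 * ⟪x + t • z, z⟫) t := by
  simpa using (((hasDerivAt_id t).smul_const z).const_add x).norm_sq.const_add 1

theorem hasDerivAt_inner_line (t : ℝ) :
    HasDerivAt (fun t : ℝ => ⟪x + t • z, z⟫) (‖z‖ ^ 2) t := by
  simpa using (((hasDerivAt_id t).smul_const z).const_add x).inner ℝ (hasDerivAt_const t z)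

theorem hasDerivAt_rpow_one_add_norm_sq_line (t : ℝ) :
    HasDerivAt (fun t : ℝ => (1 + ‖x + t • z‖ ^ 2) ^ s)
      (2 * s * ⟪x + t • z, z⟫ * (1 + ‖x + t • z‖ ^ 2) ^ (s - 1)) t := by
  have := (hasDerivAt_one_add_norm_sq_line x z t).rpow_const (p := s) (Or.inl (by positivity))
  convert this using 1
  ring

theorem hasDerivAt_deriv_rpow_one_add_norm_sq_line (t : ℝ) :
    HasDerivAt (fun t : ℝ => 2 * s * ⟪x + t • z, z⟫ * (1 + ‖x + t • z‖ ^ 2) ^ (s - 1))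
      (2 * s * (1 + ‖x + t • z‖ ^ 2) ^ (s - 2) *
        (‖z‖ ^ 2 * (1 + ‖x + t • z‖ ^ 2) + 2 * (s - 1) * ⟪x + t • z, z⟫ ^ 2)) t := by
  have hq : 0 < 1 + ‖x + t • z‖ ^ 2 := by positivity
  have := ((hasDerivAt_inner_line x z t).const_mul (2 * s)).mul
    ((hasDerivAt_one_add_norm_sq_line x z t).rpow_const (p := s - 1) (Or.inl hq.ne'))
  refine this.congr_deriv ?_
  rw [show s - 1 = (s - 2) + 1 by ring, rpow_add_one hq.ne', show s - 2 + 1 - 1 = s - 2 by ring]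
  ring

end Line

section Bounds

variable {E : Type*} [NormedAddCommGroup E] [InnerProductSpace ℝ E]

theorem abs_deriv_deriv_rpow_one_add_norm_sq_le {s : ℝ} (hs0 : 0 ≤ s) (hs1 : s ≤ 1) (y z : E) :
    |2 * s * (1 + ‖y‖ ^ 2) ^ (s - 2) * (‖z‖ ^ 2 * (1 + ‖y‖ ^ 2) + 2 * (s - 1) * ⟪y, z⟫ ^ 2)|
      ≤ 2 * s * ‖z‖ ^ 2 * (1 + ‖y‖ ^ 2) ^ (s - 1) := by
  set q := 1 + ‖y‖ ^ 2
  have hq : 0 < q := by positivity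
  have hinner : ⟪y, z⟫ ^ 2 ≤ ‖z‖ ^ 2 * q := by
    have := abs_real_inner_le_norm y z
    calc ⟪y, z⟫ ^ 2 = |⟪y, z⟫| ^ 2 := (sq_abs _).symm
      _ ≤ (‖y‖ * ‖z‖) ^ 2 := by gcongr
      _ ≤ ‖z‖ ^ 2 * q := by nlinarith [sq_nonneg ‖z‖]
  have hbracket : |‖z‖ ^ 2 * q + 2 * (s - 1) * ⟪y, z⟫ ^ 2| ≤ ‖z‖ ^ 2 * q :=
    abs_le.2 ⟨by nlinarith [sq_nonneg ⟪y, z⟫], by nlinarith [sq_nonneg ⟪y, z⟫]⟩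
  calc |2 * s * q ^ (s - 2) * (‖z‖ ^ 2 * q + 2 * (s - 1) * ⟪y, z⟫ ^ 2)|
      = 2 * s * q ^ (s - 2) * |‖z‖ ^ 2 * q + 2 * (s - 1) * ⟪y, z⟫ ^ 2| := by
        rw [abs_mul, abs_of_nonneg (by positivity)]
    _ ≤ 2 * s * q ^ (s - 2) * (‖z‖ ^ 2 * q) := by gcongr
    _ = 2 * s * ‖z‖ ^ 2 * q ^ (s - 1) := by
        rw [show s - 1 = (s - 2) + 1 by ring, rpow_add_one hq.ne']
        ring

theorem half_norm_le_norm_add_smul {x z : E} (hxz : 2 * ‖z‖ ≤ ‖x‖) {t : ℝ} (ht : |t| ≤ 1) :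
    ‖x‖ / 2 ≤ ‖x + t • z‖ := by
  have hx := norm_sub_le (x + t • z) (t • z)
  rw [add_sub_cancel_right, norm_smul, Real.norm_eq_abs] at hx
  nlinarith [norm_nonneg z]

theorem abs_deriv_deriv_rpow_one_add_norm_sq_line_le {s : ℝ} (hs0 : 0 ≤ s) (hs1 : s ≤ 1)
    {x z : E} (hxz : 2 * ‖z‖ ≤ ‖x‖) {t : ℝ} (ht : |t| ≤ 1) :
    |2 * s * (1 + ‖x + t • z‖ ^ 2) ^ (s - 2) *
        (‖z‖ ^ 2 * (1 + ‖x + t • z‖ ^ 2) + 2 * (s - 1) * ⟪x + t • z, z⟫ ^ 2)|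
      ≤ 2 * s * ‖z‖ ^ 2 * (1 + ‖x‖ ^ 2 / 4) ^ (s - 1) := by
  have hnorm := half_norm_le_norm_add_smul hxz ht
  calc _ ≤ 2 * s * ‖z‖ ^ 2 * (1 + ‖x + t • z‖ ^ 2) ^ (s - 1) :=
        abs_deriv_deriv_rpow_one_add_norm_sq_le hs0 hs1 _ z
    _ ≤ _ := by
        gcongr 2 * s * ‖z‖ ^ 2 * ?_
        exact rpow_le_rpow_of_nonpos (by positivity) (by nlinarith [norm_nonneg x]) (by linarith)

end Bounds

theorem stmt_2_general (d : ℕ) (p : ℝ) (hp : p ∈ Set.Ioo (0 : ℝ) 2)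
    (x z : EuclideanSpace ℝ (Fin d)) (hxz : 2 * ‖z‖ ≤ ‖x‖) :
    |(1 + ‖x + z‖ ^ 2) ^ (p / 2) + (1 + ‖x - z‖ ^ 2) ^ (p / 2)
        - 2 * (1 + ‖x‖ ^ 2) ^ (p / 2)|
      ≤ 3 * p * ‖z‖ ^ 2 * (1 + ‖x‖ ^ 2 / 4) ^ (p / 2 - 1) := by
  obtain ⟨hp0, hp2⟩ := hp
  have key := norm_add_sub_two_smul_le_of_norm_deriv_deriv_le zero_le_one
    (fun t _ => hasDerivAt_rpow_one_add_norm_sq_line x z (p / 2) t)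
    (fun t _ => hasDerivAt_deriv_rpow_one_add_norm_sq_line x z (p / 2) t)
    (fun t ht => abs_deriv_deriv_rpow_one_add_norm_sq_line_le (by linarith) (by linarith) hxz
      (abs_le.2 ht))
  simp only [one_smul, neg_smul, zero_smul, add_zero, ← sub_eq_add_neg, smul_eq_mul,
    Real.norm_eq_abs, one_pow, mul_one] at key
  have : 0 ≤ p * ‖z‖ ^ 2 * (1 + ‖x‖ ^ 2 / 4) ^ (p / 2 - 1) := by positivity
  linarith

/-- For `p ∈ (0,2)` and `x, z ∈ ℝ^d` with `2|z| ≤ |x|`, one has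
`|V_p(x+z) + V_p(x-z) - 2 V_p(x)| ≤ 3p |z|² (1 + |x|²/4)^(p/2 - 1)`,
where `V_p(x) = (1+|x|²)^(p/2)`. -/
theorem stmt_2 (d : ℕ) (hd : 1 ≤ d) (p : ℝ) (hp : p ∈ Set.Ioo (0 : ℝ) 2)
    (x z : EuclideanSpace ℝ (Fin d)) (hxz : 2 * ‖z‖ ≤ ‖x‖) :
    |(1 + ‖x + z‖ ^ 2) ^ (p / 2) + (1 + ‖x - z‖ ^ 2) ^ (p / 2)
        - 2 * (1 + ‖x‖ ^ 2) ^ (p / 2)|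
      ≤ 3 * p * ‖z‖ ^ 2 * (1 + ‖x‖ ^ 2 / 4) ^ (p / 2 - 1) :=
  stmt_2_general d p hp x z hxz
end

section
/- Let d ≥ 1 and p ∈ (0,2]. For all x, z ∈ ℝ^d one has |(1+|x+z|²)^{p/2} − (1+|x|²)^{p/2}| ≤ 2^{p/2} |x|^{p/2} |z|^{p/2} + |z|^p. -/
/-!
Since `t ↦ t ^ (p / 2)` is `(p / 2)`-Hölder on `[0, ∞)` with constant one, the left-hand side is at
most `|‖x + z‖² - ‖x‖²| ^ (p / 2)`. The triangle inequality bounds `|‖x + z‖² - ‖x‖²|` by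
`2 ‖x‖ ‖z‖ + ‖z‖²`, and subadditivity of `t ↦ t ^ (p / 2)` splits the power of this sum.
-/

open Real

namespace Real

theorem abs_rpow_sub_rpow_le {q : ℝ} (hq0 : 0 ≤ q) (hq1 : q ≤ 1) {a b : ℝ}
    (ha : 0 ≤ a) (hb : 0 ≤ b) : |a ^ q - b ^ q| ≤ |a - b| ^ q := by
  wlog hba : b ≤ a generalizing a b
  · rw [abs_sub_comm, abs_sub_comm a]
    exact this hb ha (le_of_not_ge hba)
  have hsplit : a ^ q ≤ (a - b) ^ q + b ^ q := by
    simpa using rpow_add_le_add_rpow (sub_nonneg.2 hba) hb hq0 hq1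
  rw [abs_of_nonneg (sub_nonneg.2 hba),
    abs_of_nonneg (sub_nonneg.2 (rpow_le_rpow hb hba hq0))]
  linarith

end Real

theorem abs_norm_add_sq_sub_norm_sq_le {E : Type*} [SeminormedAddCommGroup E] (x z : E) :
    |‖x + z‖ ^ 2 - ‖x‖ ^ 2| ≤ 2 * ‖x‖ * ‖z‖ + ‖z‖ ^ 2 := by
  have hdiff : |‖x + z‖ - ‖x‖| ≤ ‖z‖ := by
    simpa using abs_norm_sub_norm_le (x + z) x
  have hsum : |‖x + z‖ + ‖x‖| ≤ 2 * ‖x‖ + ‖z‖ := by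
    rw [abs_of_nonneg (by positivity)]
    linarith [norm_add_le x z]
  calc |‖x + z‖ ^ 2 - ‖x‖ ^ 2| = |‖x + z‖ + ‖x‖| * |‖x + z‖ - ‖x‖| := by
        rw [sq_sub_sq, abs_mul]
    _ ≤ (2 * ‖x‖ + ‖z‖) * ‖z‖ :=
        mul_le_mul hsum hdiff (abs_nonneg _) (by positivity)
    _ = 2 * ‖x‖ * ‖z‖ + ‖z‖ ^ 2 := by ring

theorem stmt_3_general (d : ℕ) (p : ℝ) (hp : p ∈ Set.Ioc (0 : ℝ) 2)
    (x z : EuclideanSpace ℝ (Fin d)) :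
    |(1 + ‖x + z‖ ^ 2) ^ (p / 2) - (1 + ‖x‖ ^ 2) ^ (p / 2)|
      ≤ 2 ^ (p / 2) * ‖x‖ ^ (p / 2) * ‖z‖ ^ (p / 2) + ‖z‖ ^ p := by
  have hq0 : 0 ≤ p / 2 := by linarith [hp.1]
  have hq1 : p / 2 ≤ 1 := by linarith [hp.2]
  calc |(1 + ‖x + z‖ ^ 2) ^ (p / 2) - (1 + ‖x‖ ^ 2) ^ (p / 2)|
      ≤ |(1 + ‖x + z‖ ^ 2) - (1 + ‖x‖ ^ 2)| ^ (p / 2) :=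
        abs_rpow_sub_rpow_le hq0 hq1 (by positivity) (by positivity)
    _ ≤ (2 * ‖x‖ * ‖z‖ + ‖z‖ ^ 2) ^ (p / 2) := by
        rw [add_sub_add_left_eq_sub]
        exact rpow_le_rpow (abs_nonneg _) (abs_norm_add_sq_sub_norm_sq_le x z) hq0
    _ ≤ (2 * ‖x‖ * ‖z‖) ^ (p / 2) + (‖z‖ ^ 2) ^ (p / 2) :=
        rpow_add_le_add_rpow (by positivity) (by positivity) hq0 hq1
    _ = 2 ^ (p / 2) * ‖x‖ ^ (p / 2) * ‖z‖ ^ (p / 2) + ‖z‖ ^ p := by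
        rw [mul_rpow (by positivity) (norm_nonneg _), mul_rpow zero_le_two (norm_nonneg _),
          ← rpow_natCast, ← rpow_mul (norm_nonneg _)]
        norm_num [mul_div_cancel₀]

/-- For `p ∈ (0,2]` and all `x, z ∈ ℝ^d`:
`|(1+|x+z|²)^(p/2) − (1+|x|²)^(p/2)| ≤ 2^(p/2) |x|^(p/2) |z|^(p/2) + |z|^p`. -/
theorem stmt_3 (d : ℕ) (hd : 1 ≤ d) (p : ℝ) (hp : p ∈ Set.Ioc (0 : ℝ) 2)
    (x z : EuclideanSpace ℝ (Fin d)) :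
    |(1 + ‖x + z‖ ^ 2) ^ (p / 2) - (1 + ‖x‖ ^ 2) ^ (p / 2)|
      ≤ 2 ^ (p / 2) * ‖x‖ ^ (p / 2) * ‖z‖ ^ (p / 2) + ‖z‖ ^ p :=
  stmt_3_general d p hp x z
end

section
/- Let κ₀, κ₁, r, p > 0 and let f : [0,∞) → [0,∞) be continuously differentiable with f'(t) ≤ −κ₀ f(t)^{1+r/p} + κ₁ for all t > 0. Then there exists a constant C > 0, depending only on κ₀, r and p, such that for all t > 0: f(t) ≤ C t^{−p/r} + (r κ₁/(r+2p)) t. -/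
/-!
The function `B(t) = C t^{-p/r} + a κ₁ t`, with `a = r/(r+2p)`, is a strict supersolution of
`y' = -κ₀ y^{1+r/p} + κ₁` on `(0,∞)`: by superadditivity of `y ↦ y^{1+r/p}`, `κ₀ B^{1+r/p}`
dominates `κ₀ C^{1+r/p} t^{-p/r-1} + κ₀ (a κ₁ t)^{1+r/p}`; for small `t` the first term absorbs
`-B'(t)` and `(1-a)κ₁` once `C` is large, for large `t` the second term absorbs `(1-a)κ₁`, and the
threshold between the two regimes scales so that `C` does not depend on `κ₁`. Since `B` blows up
at `0` while `f` is bounded near `0`, `f` starts below `B` and can never cross it.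
-/

open Real Set Filter Topology

section Barrier

variable {β : ℝ}

lemma rpow_rpow_neg_one_add_inv (hβ : 0 < β) {x : ℝ} (hx : 0 ≤ x) :
    (x ^ (-β)) ^ (1 + β⁻¹) = x ^ (-β - 1) := by
  rw [← rpow_mul hx]
  congr 1
  field_simp
  ring

lemma mul_rpow_one_add_inv (hβ : 0 < β) {κ x : ℝ} (hκ : 0 ≤ κ) (hx : 0 ≤ x) :
    (κ * x) ^ (1 + β⁻¹) = κ * (κ * x ^ (β + 1)) ^ β⁻¹ := by
  have hq : 1 + β⁻¹ ≠ 0 := by positivity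
  rw [mul_rpow hκ (rpow_nonneg hx _), ← rpow_mul hx, ← mul_assoc, ← rpow_one_add' hκ hq,
    mul_rpow hκ hx]
  congr 2
  field_simp

lemma lt_mul_mul_rpow_one_add_inv (hβ : 0 < β) {K L κ x : ℝ} (hK : 0 < K) (hL : 0 ≤ L)
    (hκ : 0 < κ) (hx : 0 ≤ x) (h : (L / K) ^ β < κ * x ^ (β + 1)) :
    L * κ < K * (κ * x) ^ (1 + β⁻¹) := by
  have hLK : L / K < (κ * x ^ (β + 1)) ^ β⁻¹ :=
    (lt_rpow_inv_iff_of_pos (by positivity) (by positivity) hβ).2 h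
  rw [div_lt_iff₀' hK] at hLK
  rw [mul_rpow_one_add_inv hβ hκ.le hx]
  calc L * κ < K * (κ * x ^ (β + 1)) ^ β⁻¹ * κ := mul_lt_mul_of_pos_right hLK hκ
    _ = K * (κ * (κ * x ^ (β + 1)) ^ β⁻¹) := by ring

lemma exists_pos_mul_add_le_mul_rpow_one_add_inv (hβ : 0 < β) {κ₀ E : ℝ} (hκ₀ : 0 < κ₀)
    (hE : 0 ≤ E) : ∃ C > 0, β * C + E ≤ κ₀ * C ^ (1 + β⁻¹) := by
  set C := max 1 (((β + E) / κ₀) ^ β)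
  have hC : 1 ≤ C := le_max_left _ _
  have hCinv : (β + E) / κ₀ ≤ C ^ β⁻¹ :=
    (le_rpow_inv_iff_of_pos (by positivity) (by positivity) hβ).2 (le_max_right _ _)
  rw [div_le_iff₀' hκ₀] at hCinv
  refine ⟨C, by positivity, ?_⟩
  rw [rpow_one_add' (by positivity) (by positivity)]
  nlinarith

lemma mul_rpow_neg_sub_one_add_lt (hβ : 0 < β) {κ₀ κ₁ a C x : ℝ} (hκ₀ : 0 < κ₀) (hκ₁ : 0 < κ₁)
    (ha₀ : 0 < a) (ha₁ : a ≤ 1) (hC : 0 < C)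
    (hCbound : β * C + (1 - a) * ((1 - a) / (κ₀ * a ^ (1 + β⁻¹))) ^ β ≤ κ₀ * C ^ (1 + β⁻¹))
    (hx : 0 < x) :
    β * C * x ^ (-β - 1) + (1 - a) * κ₁ < κ₀ * (C * x ^ (-β) + a * κ₁ * x) ^ (1 + β⁻¹) := by
  set q := 1 + β⁻¹
  -- the regimes are separated by `κ₁ x^{β+1} = M`, a threshold independent of `C` and `κ₁`
  set M := ((1 - a) / (κ₀ * a ^ q)) ^ β
  have hM : 0 ≤ M := rpow_nonneg (div_nonneg (by linarith) (by positivity)) _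
  have hxβ : 0 < x ^ (-β - 1) := rpow_pos_of_pos hx _
  have hsplit : κ₀ * C ^ q * x ^ (-β - 1) + κ₀ * a ^ q * (κ₁ * x) ^ q ≤
      κ₀ * (C * x ^ (-β) + a * κ₁ * x) ^ q := by
    have := add_rpow_le_rpow_add (p := q) (by positivity : 0 ≤ C * x ^ (-β))
      (by positivity : 0 ≤ a * (κ₁ * x)) (by simp only [q]; linarith [inv_pos.2 hβ])
    rw [mul_rpow hC.le (by positivity), rpow_rpow_neg_one_add_inv hβ hx.le,
      mul_rpow ha₀.le (by positivity), ← mul_assoc a] at this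
    calc _ = κ₀ * (C ^ q * x ^ (-β - 1) + a ^ q * (κ₁ * x) ^ q) := by ring
      _ ≤ _ := mul_le_mul_of_nonneg_left this hκ₀.le
  have hdrift : β * C * x ^ (-β - 1) + (1 - a) * M * x ^ (-β - 1) ≤
      κ₀ * C ^ q * x ^ (-β - 1) := by
    linarith [mul_le_mul_of_nonneg_right hCbound hxβ.le]
  rcases lt_or_ge M (κ₁ * x ^ (β + 1)) with hlarge | hsmall
  · have : (1 - a) * κ₁ < κ₀ * a ^ q * (κ₁ * x) ^ q :=
      lt_mul_mul_rpow_one_add_inv hβ (by positivity) (by linarith) hκ₁ hx.le hlarge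
    have : 0 ≤ (1 - a) * M * x ^ (-β - 1) := by positivity
    linarith
  · have hκ₁M : κ₁ ≤ M * x ^ (-β - 1) := by
      have hone : x ^ (β + 1) * x ^ (-β - 1) = 1 := by
        rw [← rpow_add hx]; norm_num
      calc κ₁ = κ₁ * x ^ (β + 1) * x ^ (-β - 1) := by rw [mul_assoc, hone, mul_one]
        _ ≤ M * x ^ (-β - 1) := mul_le_mul_of_nonneg_right hsmall hxβ.le
    have : 0 < κ₀ * a ^ q * (κ₁ * x) ^ q := by positivity
    nlinarith [mul_le_mul_of_nonneg_left hκ₁M (by linarith : 0 ≤ 1 - a)]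

end Barrier

lemma le_of_hasDerivAt_lt_of_tendsto_atTop {f f' B B' : ℝ → ℝ} (hf : ContinuousOn f (Ici 0))
    (hf' : ∀ x, 0 < x → HasDerivAt f (f' x) x) (hB : ∀ x, 0 < x → HasDerivAt B (B' x) x)
    (hB₀ : Tendsto B (𝓝[>] 0) atTop) (hcross : ∀ x, 0 < x → f x = B x → f' x < B' x)
    {t : ℝ} (ht : 0 < t) : f t ≤ B t := by
  obtain ⟨K, hK⟩ := isCompact_Icc.exists_bound_of_continuousOn
    (hf.mono (Icc_subset_Ici_self : Icc 0 t ⊆ Ici 0))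
  obtain ⟨t₀, ⟨ht₀, ht₀t⟩, hKB⟩ :=
    (Filter.Eventually.and (Ioo_mem_nhdsGT ht) (hB₀.eventually_ge_atTop K)).exists
  have hpos : ∀ x ∈ Ico t₀ t, 0 < x := fun x hx => ht₀.trans_le hx.1
  refine image_le_of_deriv_right_lt_deriv_boundary' (hf.mono fun x hx => ht₀.le.trans hx.1)
    (fun x hx => (hf' x (hpos x hx)).hasDerivWithinAt) ?_
    (fun x hx => (hB x (ht₀.trans_le hx.1)).continuousAt.continuousWithinAt)
    (fun x hx => (hB x (hpos x hx)).hasDerivWithinAt)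
    (fun x hx => hcross x (hpos x hx)) ⟨ht₀t.le, le_rfl⟩
  exact (le_abs_self _).trans ((hK t₀ ⟨ht₀.le, ht₀t.le⟩).trans hKB)

/-- Let `κ₀, κ₁, r, p > 0` and `f : [0,∞) → [0,∞)` be continuously
differentiable with `f'(t) ≤ -κ₀ f(t)^{1+r/p} + κ₁` for all `t > 0`. Then there is a
constant `C > 0`, depending only on `κ₀, r, p`, such that for all `t > 0`:
`f(t) ≤ C t^{-p/r} + (r κ₁/(r+2p)) t`. -/
theorem stmt_5 (κ₀ r p : ℝ) (hκ₀ : 0 < κ₀) (hr : 0 < r) (hp : 0 < p) :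
    ∃ C > 0, ∀ κ₁ : ℝ, 0 < κ₁ → ∀ f : ℝ → ℝ,
      ContDiffOn ℝ 1 f (Set.Ici 0) →
      (∀ t, 0 ≤ t → 0 ≤ f t) →
      (∀ t, 0 < t → deriv f t ≤ -κ₀ * f t ^ (1 + r / p) + κ₁) →
      ∀ t, 0 < t → f t ≤ C * t ^ (-(p / r)) + (r * κ₁ / (r + 2 * p)) * t := by
  have hβ : 0 < p / r := div_pos hp hr
  set a := r / (r + 2 * p)
  have ha₀ : 0 < a := by positivity
  have ha₁ : a ≤ 1 := (div_le_one (by positivity)).2 (by linarith)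
  obtain ⟨C, hC, hCbound⟩ := exists_pos_mul_add_le_mul_rpow_one_add_inv hβ hκ₀
    (E := (1 - a) * ((1 - a) / (κ₀ * a ^ (1 + (p / r)⁻¹))) ^ (p / r))
    (mul_nonneg (by linarith) (rpow_nonneg (div_nonneg (by linarith) (by positivity)) _))
  refine ⟨C, hC, fun κ₁ hκ₁ f hf _ hf' t ht => ?_⟩
  rw [mul_div_right_comm]
  refine le_of_hasDerivAt_lt_of_tendsto_atTop (B := fun y => C * y ^ (-(p / r)) + a * κ₁ * y)
    (B' := fun y => C * (-(p / r) * y ^ (-(p / r) - 1)) + a * κ₁) hf.continuousOn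
    (fun x hx => ((hf.contDiffAt (Ici_mem_nhds hx)).differentiableAt one_ne_zero).hasDerivAt)
    (fun x hx => ((hasDerivAt_rpow_const (Or.inl hx.ne')).const_mul C).add
      ((hasDerivAt_id x).const_mul (a * κ₁) |>.congr_deriv (mul_one _)))
    (((tendsto_rpow_neg_nhdsGT_zero (neg_lt_zero.2 hβ)).const_mul_atTop hC).atTop_add
      (((continuous_const_mul (a * κ₁)).tendsto' 0 0 (mul_zero _)).mono_left nhdsWithin_le_nhds))
    (fun x hx hfx => ?_) ht
  have hkey := mul_rpow_neg_sub_one_add_lt hβ hκ₀ hκ₁ ha₀ ha₁ hC hCbound hx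
  have hfx' := hf' x hx
  rw [← inv_div p r, hfx] at hfx'
  linarith
end

section
/- Let d ≥ 1, α ∈ (0,2), r > −α, γ ∈ (0,1], and q > 0. Let b : ℝ^d → ℝ^d, σ : ℝ^d → ℝ^{d×d} be measurable and ℓ₁, ℓ₂ : ℝ^d → [0,∞) be such that for all x ∈ ℝ^d and |h| ≤ 1: |b(x+h) − b(x)| ≤ ℓ₁(x)|h|^γ and ‖σ(x+h) − σ(x)‖ ≤ ℓ₂(x)|h|^γ. Assume there exist ε₀ ∈ (0,1] and c₀, c₁ > 0 such that for all |x| > 1: ⟨x, b(x)⟩ + ε₀ ℓ₁(x)|x| + q(‖σ(x)‖ + ε₀ ℓ₂(x))^α |x|^{2−α} ≤ −c₀ |x|^{2+r} + c₁. Let φ be a smooth probability density supported in the closed unit ball, φ_ε(x) := ε^{−d}φ(x/ε), and set b_ε := b * φ_ε, σ_ε := σ * φ_ε (componentwise convolution). Then for every ε ∈ (0, ε₀^{1/γ}) and every |x| > 1: ⟨x, b_ε(x)⟩ + q ‖σ_ε(x)‖^α |x|^{2−α} ≤ −c₀ |x|^{2+r} + c₁. -/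
open MeasureTheory Real
open scoped RealInnerProductSpace Matrix.Norms.L2Operator

private lemma entry_abs_le {d : ℕ} (M : Matrix (Fin d) (Fin d) ℝ) (i j : Fin d) :
    |M i j| ≤ ‖Matrix.toEuclideanCLM (𝕜 := ℝ) M‖ := by
  set v : EuclideanSpace ℝ (Fin d) :=
    Matrix.toEuclideanCLM (𝕜 := ℝ) M (EuclideanSpace.single j 1) with hv
  have h2 := Matrix.ofLp_toEuclideanCLM (𝕜 := ℝ) M (EuclideanSpace.single j 1)
  have h1 : v i = M i j := by
    calc v i = ((WithLp.equiv 2 (Fin d → ℝ))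
          ((Matrix.toEuclideanCLM (𝕜 := ℝ) M) (EuclideanSpace.single j 1))) i := rfl
      _ = ((Matrix.toLin' M) ((WithLp.equiv 2 (Fin d → ℝ)) (EuclideanSpace.single j 1))) i := by
          exact congrFun h2 i
      _ = M i j := by simp [Matrix.toLin'_apply]
  have h3 : |v i| ≤ ‖v‖ := by
    have h := abs_real_inner_le_norm (EuclideanSpace.single i (1:ℝ)) v
    simpa [EuclideanSpace.inner_single_left] using h
  have h4 : ‖v‖ ≤ ‖Matrix.toEuclideanCLM (𝕜 := ℝ) M‖ := by
    have h := (Matrix.toEuclideanCLM (𝕜 := ℝ) M).le_opNorm (EuclideanSpace.single j (1:ℝ))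
    rw [EuclideanSpace.norm_single, norm_one, mul_one] at h
    exact h
  calc |M i j| = |v i| := by rw [h1]
    _ ≤ ‖v‖ := h3
    _ ≤ _ := h4

private lemma entry_abs_le' {d : ℕ} (M : Matrix (Fin d) (Fin d) ℝ) (i j : Fin d) :
    |M i j| ≤ ‖M‖ :=
  entry_abs_le M i j

private noncomputable def moll (d : ℕ) (φ : EuclideanSpace ℝ (Fin d) → ℝ) (ε : ℝ)
    (y : EuclideanSpace ℝ (Fin d)) : ℝ := ε ^ (-(d : ℝ)) * φ (ε⁻¹ • y)

set_option maxHeartbeats 4000000 in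
set_option synthInstance.maxHeartbeats 2000000 in
/-- **estimate (3.14) of the paper.** If `b, σ` are locally `γ`-Hölder with
moduli `ℓ₁, ℓ₂` and satisfy the dissipativity condition **(H^{r,q}_glo)** with margin
`ε₀`, then the mollified coefficients `b_ε = b * φ_ε` and `σ_ε = σ * φ_ε` satisfy, for
every `ε ∈ (0, ε₀^{1/γ})` and `|x| > 1`:
`⟨x, b_ε(x)⟩ + q ‖σ_ε(x)‖^α |x|^{2-α} ≤ -c₀ |x|^{2+r} + c₁`. -/
theorem stmt_8 (d : ℕ) (hd : 1 ≤ d) (α r γ q : ℝ)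
    (hα : α ∈ Set.Ioo (0 : ℝ) 2) (hr : -α < r) (hγ : γ ∈ Set.Ioc (0 : ℝ) 1) (hq : 0 < q)
    (b : EuclideanSpace ℝ (Fin d) → EuclideanSpace ℝ (Fin d))
    (σ : EuclideanSpace ℝ (Fin d) → Matrix (Fin d) (Fin d) ℝ)
    (ℓ₁ ℓ₂ : EuclideanSpace ℝ (Fin d) → ℝ)
    (hbm : Measurable b) (hσm : ∀ i j : Fin d, Measurable fun x => σ x i j)
    (hℓ₁0 : ∀ x, 0 ≤ ℓ₁ x) (hℓ₂0 : ∀ x, 0 ≤ ℓ₂ x)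
    (hbhol : ∀ x h : EuclideanSpace ℝ (Fin d), ‖h‖ ≤ 1 →
      ‖b (x + h) - b x‖ ≤ ℓ₁ x * ‖h‖ ^ γ)
    (hσhol : ∀ x h : EuclideanSpace ℝ (Fin d), ‖h‖ ≤ 1 →
      ‖Matrix.toEuclideanCLM (𝕜 := ℝ) (σ (x + h)) - Matrix.toEuclideanCLM (𝕜 := ℝ) (σ x)‖
        ≤ ℓ₂ x * ‖h‖ ^ γ)
    (ε₀ : ℝ) (hε₀ : ε₀ ∈ Set.Ioc (0 : ℝ) 1) (c₀ c₁ : ℝ) (hc₀ : 0 < c₀) (hc₁ : 0 < c₁)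
    (hdiss : ∀ x : EuclideanSpace ℝ (Fin d), 1 < ‖x‖ →
      ⟪x, b x⟫ + ε₀ * ℓ₁ x * ‖x‖
          + q * (‖Matrix.toEuclideanCLM (𝕜 := ℝ) (σ x)‖ + ε₀ * ℓ₂ x) ^ α * ‖x‖ ^ (2 - α)
        ≤ -c₀ * ‖x‖ ^ (2 + r) + c₁)
    (φ : EuclideanSpace ℝ (Fin d) → ℝ) (hφ : ContDiff ℝ (⊤ : ℕ∞) φ) (hφ0 : ∀ x, 0 ≤ φ x)
    (hφsupp : Function.support φ ⊆ Metric.closedBall 0 1)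
    (hφint : ∫ x : EuclideanSpace ℝ (Fin d), φ x = 1)
    (ε : ℝ) (hε : ε ∈ Set.Ioo (0 : ℝ) (ε₀ ^ (1 / γ))) :
    ∀ x : EuclideanSpace ℝ (Fin d), 1 < ‖x‖ →
      ⟪x, (∫ y : EuclideanSpace ℝ (Fin d), (ε ^ (-(d : ℝ)) * φ (ε⁻¹ • y)) • b (x - y))⟫
        + q * ‖Matrix.toEuclideanCLM (𝕜 := ℝ)
              (Matrix.of fun i j : Fin d =>
                ∫ y : EuclideanSpace ℝ (Fin d),
                  (ε ^ (-(d : ℝ)) * φ (ε⁻¹ • y)) * σ (x - y) i j)‖ ^ α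
          * ‖x‖ ^ (2 - α)
      ≤ -c₀ * ‖x‖ ^ (2 + r) + c₁ := by
  obtain ⟨hα0, hα2⟩ := hα
  obtain ⟨hγ0, hγ1⟩ := hγ
  obtain ⟨hε0, hεlt⟩ := hε
  obtain ⟨hε₀0, hε₀1⟩ := hε₀
  intro x hx
  show ⟪x, (∫ y : EuclideanSpace ℝ (Fin d), moll d φ ε y • b (x - y))⟫
        + q * ‖Matrix.toEuclideanCLM (𝕜 := ℝ)
              (Matrix.of fun i j : Fin d =>
                ∫ y : EuclideanSpace ℝ (Fin d), moll d φ ε y * σ (x - y) i j)‖ ^ α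
          * ‖x‖ ^ (2 - α)
      ≤ -c₀ * ‖x‖ ^ (2 + r) + c₁
  set ψ : EuclideanSpace ℝ (Fin d) → ℝ := moll d φ ε with hψ
  have hψdef : ∀ y, ψ y = ε ^ (-(d : ℝ)) * φ (ε⁻¹ • y) := fun y => rfl
  -- basic facts about ε
  have hεle1 : ε ≤ 1 := le_trans hεlt.le (Real.rpow_le_one hε₀0.le hε₀1 (by positivity))
  have hεγ : ε ^ γ ≤ ε₀ := by
    have h1 : ε ^ γ ≤ (ε₀ ^ (1 / γ)) ^ γ := Real.rpow_le_rpow hε0.le hεlt.le hγ0.le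
    rwa [← Real.rpow_mul hε₀0.le, one_div_mul_cancel hγ0.ne', Real.rpow_one] at h1
  -- basic facts about ψ
  have hψ0 : ∀ y, 0 ≤ ψ y := fun y => by
    rw [hψdef]; exact mul_nonneg (Real.rpow_nonneg hε0.le _) (hφ0 _)
  have hψzero : ∀ y : EuclideanSpace ℝ (Fin d), ε < ‖y‖ → ψ y = 0 := by
    intro y hy
    have hφ0' : φ (ε⁻¹ • y) = 0 := by
      by_contra h
      have hmem := hφsupp (Function.mem_support.2 h)
      rw [Metric.mem_closedBall, dist_zero_right] at hmem
      have : ‖ε⁻¹ • y‖ = ε⁻¹ * ‖y‖ := by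
        rw [norm_smul, Real.norm_eq_abs, abs_of_pos (inv_pos.2 hε0)]
      rw [this] at hmem
      have h1 : ε⁻¹ * ε < ε⁻¹ * ‖y‖ := by
        exact mul_lt_mul_of_pos_left hy (inv_pos.2 hε0)
      rw [inv_mul_cancel₀ hε0.ne'] at h1
      linarith
    rw [hψdef, hφ0', mul_zero]
  have hψcont : Continuous ψ := by
    rw [hψ]
    exact continuous_const.mul (hφ.continuous.comp (continuous_const_smul _))
  have hψcs : HasCompactSupport ψ :=
    HasCompactSupport.intro (isCompact_closedBall (0 : EuclideanSpace ℝ (Fin d)) ε)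
      (fun y hy => hψzero y (by
        rw [Metric.mem_closedBall, dist_zero_right, not_le] at hy; exact hy))
  have hψInt : Integrable ψ := hψcont.integrable_of_hasCompactSupport hψcs
  have hψ1 : ∫ y, ψ y = 1 := by
    have h := MeasureTheory.Measure.integral_comp_inv_smul (volume : Measure (EuclideanSpace ℝ (Fin d))) φ ε
    rw [hφint, finrank_euclideanSpace_fin, smul_eq_mul, mul_one] at h
    have habs : |ε ^ d| = ε ^ d := abs_of_pos (pow_pos hε0 d)
    calc ∫ y, ψ y = ∫ y, ε ^ (-(d : ℝ)) * φ (ε⁻¹ • y) := by simp_rw [hψdef]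
      _ = ε ^ (-(d : ℝ)) * ∫ y, φ (ε⁻¹ • y) := integral_const_mul _ _
      _ = ε ^ (-(d : ℝ)) * ε ^ d := by rw [h, habs]
      _ = 1 := by
          rw [← Real.rpow_natCast ε d, ← Real.rpow_add hε0]
          simp
  obtain ⟨Cψ, hCψ⟩ := hψcont.bounded_above_of_compact_support hψcs
  have hCψ0 : 0 ≤ Cψ := le_trans (norm_nonneg (ψ 0)) (hCψ 0)
  -- the drift part
  have hbmeas : AEStronglyMeasurable (fun y => ψ y • b (x - y)) volume :=
    (hψcont.aestronglyMeasurable).smul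
      ((hbm.comp (measurable_const.sub measurable_id)).aestronglyMeasurable)
  have hsub : ∀ y : EuclideanSpace ℝ (Fin d), x + -y = x - y := fun y => (sub_eq_add_neg x y).symm
  have hbd : ∀ y : EuclideanSpace ℝ (Fin d), ‖y‖ ≤ ε → ‖b (x - y) - b x‖ ≤ ℓ₁ x * ‖y‖ ^ γ := by
    intro y hy
    have h := hbhol x (-y) (by rw [norm_neg]; exact le_trans hy hεle1)
    rwa [hsub y, norm_neg] at h
  have hbbd : ∀ y : EuclideanSpace ℝ (Fin d), ‖y‖ ≤ ε → ‖b (x - y)‖ ≤ ‖b x‖ + ℓ₁ x := by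
    intro y hy
    have h := hbd y hy
    have h2 : ‖y‖ ^ γ ≤ 1 := Real.rpow_le_one (norm_nonneg y) (le_trans hy hεle1) hγ0.le
    have h3 : ℓ₁ x * ‖y‖ ^ γ ≤ ℓ₁ x * 1 := mul_le_mul_of_nonneg_left h2 (hℓ₁0 x)
    have h4 := norm_sub_norm_le (b (x - y)) (b x)
    linarith
  have hbI : Integrable (fun y => ψ y • b (x - y)) := by
    refine Integrable.mono'
      (g := (Metric.closedBall (0 : EuclideanSpace ℝ (Fin d)) ε).indicator
        (fun _ => Cψ * (‖b x‖ + ℓ₁ x))) ?_ hbmeas (ae_of_all _ ?_)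
    · exact IntegrableOn.integrable_indicator
        (integrableOn_const measure_closedBall_lt_top.ne) measurableSet_closedBall
    · intro y
      by_cases hy : y ∈ Metric.closedBall (0 : EuclideanSpace ℝ (Fin d)) ε
      · rw [Set.indicator_of_mem hy]
        have hy' : ‖y‖ ≤ ε := by rwa [Metric.mem_closedBall, dist_zero_right] at hy
        rw [norm_smul]
        exact mul_le_mul (hCψ y) (hbbd y hy') (norm_nonneg _) hCψ0
      · rw [Set.indicator_of_notMem hy]
        have h0 : ψ y = 0 := hψzero y (by
          rw [Metric.mem_closedBall, dist_zero_right, not_le] at hy; exact hy)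
        simp [h0]
  have h1 : ⟪x, ∫ y, ψ y • b (x - y)⟫ = ∫ y, ψ y * ⟪x, b (x - y)⟫ := by
    rw [← integral_inner hbI x]
    simp_rw [real_inner_smul_right]
  have hintL : Integrable (fun y => ψ y * ⟪x, b (x - y)⟫) := by
    have h := ContinuousLinearMap.integrable_comp (innerSL ℝ x) hbI
    simpa [real_inner_smul_right] using h
  have key1 : ⟪x, ∫ y, ψ y • b (x - y)⟫ ≤ ⟪x, b x⟫ + ε₀ * ℓ₁ x * ‖x‖ := by
    rw [h1]
    have h2 : ∫ y, ψ y * ⟪x, b (x - y)⟫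
        ≤ ∫ y, ψ y * (⟪x, b x⟫ + ε₀ * ℓ₁ x * ‖x‖) := by
      refine integral_mono hintL (hψInt.mul_const _) fun y => ?_
      by_cases hy : ‖y‖ ≤ ε
      · refine mul_le_mul_of_nonneg_left ?_ (hψ0 y)
        have hb := hbd y hy
        have hyγ : ‖y‖ ^ γ ≤ ε₀ :=
          le_trans (Real.rpow_le_rpow (norm_nonneg y) hy hγ0.le) hεγ
        have hinner : ⟪x, b (x - y)⟫ - ⟪x, b x⟫ = ⟪x, b (x - y) - b x⟫ :=
          (inner_sub_right x (b (x - y)) (b x)).symm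
        have h3 : ⟪x, b (x - y) - b x⟫ ≤ ‖x‖ * ‖b (x - y) - b x‖ :=
          real_inner_le_norm x _
        have h4 : ‖x‖ * ‖b (x - y) - b x‖ ≤ ‖x‖ * (ℓ₁ x * ‖y‖ ^ γ) :=
          mul_le_mul_of_nonneg_left hb (norm_nonneg x)
        have h5 : ℓ₁ x * ‖y‖ ^ γ ≤ ℓ₁ x * ε₀ := mul_le_mul_of_nonneg_left hyγ (hℓ₁0 x)
        have h6 : ‖x‖ * (ℓ₁ x * ‖y‖ ^ γ) ≤ ‖x‖ * (ℓ₁ x * ε₀) :=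
          mul_le_mul_of_nonneg_left h5 (norm_nonneg x)
        linarith
      · have h0 : ψ y = 0 := hψzero y (not_le.1 hy)
        simp [h0]
    calc ∫ y, ψ y * ⟪x, b (x - y)⟫ ≤ ∫ y, ψ y * (⟪x, b x⟫ + ε₀ * ℓ₁ x * ‖x‖) := h2
      _ = ⟪x, b x⟫ + ε₀ * ℓ₁ x * ‖x‖ := by rw [integral_mul_const, hψ1, one_mul]
  -- the diffusion part
  have hσmeas : ∀ i j : Fin d, Measurable fun y => σ (x - y) i j := fun i j =>
    (hσm i j).comp (measurable_const.sub measurable_id)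
  have hnorm : ∀ A : Matrix (Fin d) (Fin d) ℝ, ‖Matrix.toEuclideanCLM (𝕜 := ℝ) A‖ = ‖A‖ :=
    fun A => rfl
  have hrep : ∀ M : Matrix (Fin d) (Fin d) ℝ,
      M = ∑ i : Fin d, ∑ j : Fin d, M i j • Matrix.single i j (1 : ℝ) := by
    intro M
    conv_lhs => rw [Matrix.matrix_eq_sum_single M]
    refine Finset.sum_congr rfl fun i _ => Finset.sum_congr rfl fun j _ => ?_
    rw [Matrix.smul_single, smul_eq_mul, mul_one]
  have hAbd : ∀ y : EuclideanSpace ℝ (Fin d), ‖y‖ ≤ ε →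
      ‖σ (x - y)‖ ≤ ‖σ x‖ + ε₀ * ℓ₂ x := by
    intro y hy
    have h := hσhol x (-y) (by rw [norm_neg]; exact le_trans hy hεle1)
    rw [hsub y, norm_neg] at h
    have hdd : ‖Matrix.toEuclideanCLM (𝕜 := ℝ) (σ (x - y)) - Matrix.toEuclideanCLM (𝕜 := ℝ) (σ x)‖
        = ‖σ (x - y) - σ x‖ := by rw [← map_sub]; exact hnorm _
    rw [hdd] at h
    have hyγ : ‖y‖ ^ γ ≤ ε₀ :=
      le_trans (Real.rpow_le_rpow (norm_nonneg y) hy hγ0.le) hεγ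
    have h5 : ℓ₂ x * ‖y‖ ^ γ ≤ ℓ₂ x * ε₀ := mul_le_mul_of_nonneg_left hyγ (hℓ₂0 x)
    have h4 := norm_sub_norm_le (σ (x - y)) (σ x)
    linarith
  have hKnn : (0 : ℝ) ≤ ‖σ x‖ + ε₀ * ℓ₂ x :=
    add_nonneg (norm_nonneg _) (mul_nonneg hε₀0.le (hℓ₂0 x))
  have hgI : ∀ i j : Fin d, Integrable (fun y => ψ y * σ (x - y) i j) := by
    intro i j
    refine Integrable.mono'
      (g := (Metric.closedBall (0 : EuclideanSpace ℝ (Fin d)) ε).indicator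
        (fun _ => Cψ * (‖σ x‖ + ε₀ * ℓ₂ x))) ?_
      ((hψcont.measurable.mul (hσmeas i j)).aestronglyMeasurable) (ae_of_all _ ?_)
    · exact IntegrableOn.integrable_indicator
        (integrableOn_const measure_closedBall_lt_top.ne) measurableSet_closedBall
    · intro y
      by_cases hy : y ∈ Metric.closedBall (0 : EuclideanSpace ℝ (Fin d)) ε
      · rw [Set.indicator_of_mem hy]
        have hy' : ‖y‖ ≤ ε := by rwa [Metric.mem_closedBall, dist_zero_right] at hy
        have hent : |σ (x - y) i j| ≤ ‖σ x‖ + ε₀ * ℓ₂ x :=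
          le_trans (entry_abs_le' _ i j) (hAbd y hy')
        rw [Real.norm_eq_abs, abs_mul]
        refine mul_le_mul ?_ hent (abs_nonneg _) hCψ0
        have := hCψ y
        rwa [Real.norm_eq_abs] at this
      · rw [Set.indicator_of_notMem hy]
        have h0 : ψ y = 0 := hψzero y (by
          rw [Metric.mem_closedBall, dist_zero_right, not_le] at hy; exact hy)
        simp [h0]
  have heq : (fun y => ψ y • σ (x - y))
      = fun y => ∑ i : Fin d, ∑ j : Fin d, (ψ y * σ (x - y) i j) •
          Matrix.single i j (1 : ℝ) := by
    funext y
    conv_lhs => rw [hrep (σ (x - y))]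
    rw [Finset.smul_sum]
    refine Finset.sum_congr rfl fun i _ => ?_
    rw [Finset.smul_sum]
    refine Finset.sum_congr rfl fun j _ => ?_
    rw [smul_smul]
  have hAint : Integrable (fun y => ψ y • σ (x - y)) := by
    rw [heq]
    exact integrable_finset_sum _ fun i _ => integrable_finset_sum _ fun j _ =>
      (hgI i j).smul_const _
  have hMeq : (Matrix.of fun i j : Fin d => ∫ y, ψ y * σ (x - y) i j)
      = ∫ y, ψ y • σ (x - y) := by
    rw [heq]
    rw [integral_finset_sum _ (fun i _ => integrable_finset_sum _ fun j _ =>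
      (hgI i j).smul_const _)]
    have h2 : ∀ i : Fin d, (∫ y, ∑ j : Fin d, (ψ y * σ (x - y) i j) •
        Matrix.single i j (1 : ℝ))
        = ∑ j : Fin d, (∫ y, ψ y * σ (x - y) i j) • Matrix.single i j (1 : ℝ) := by
      intro i
      rw [integral_finset_sum _ (fun j _ => (hgI i j).smul_const _)]
      exact Finset.sum_congr rfl fun j _ => integral_smul_const _ _
    simp_rw [h2]
    conv_lhs => rw [hrep (Matrix.of fun i j : Fin d => ∫ y, ψ y * σ (x - y) i j)]
    refine Finset.sum_congr rfl fun i _ => Finset.sum_congr rfl fun j _ => ?_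
    simp
  have key2 : ‖(Matrix.of fun i j : Fin d => ∫ y, ψ y * σ (x - y) i j)‖
      ≤ ‖σ x‖ + ε₀ * ℓ₂ x := by
    rw [hMeq]
    refine le_trans (norm_integral_le_integral_norm _) ?_
    have hnb : ∫ y, ‖ψ y • σ (x - y)‖ ≤ ∫ y, ψ y * (‖σ x‖ + ε₀ * ℓ₂ x) := by
      refine integral_mono hAint.norm (hψInt.mul_const _) fun y => ?_
      dsimp only
      by_cases hy : ‖y‖ ≤ ε
      · have hns : ‖ψ y • σ (x - y)‖ = ‖ψ y‖ * ‖σ (x - y)‖ :=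
          norm_smul (β := Matrix (Fin d) (Fin d) ℝ) _ _
        rw [hns, Real.norm_of_nonneg (hψ0 y)]
        exact mul_le_mul_of_nonneg_left (hAbd y hy) (hψ0 y)
      · have h0 : ψ y = 0 := hψzero y (not_le.1 hy)
        have hz : ψ y • σ (x - y) = 0 := by
          rw [h0]; exact zero_smul ℝ _
        rw [hz, h0, norm_zero, zero_mul]
    refine le_trans hnb ?_
    rw [integral_mul_const, hψ1, one_mul]
  -- put everything together
  have h2a : (0 : ℝ) ≤ ‖x‖ ^ (2 - α) := Real.rpow_nonneg (norm_nonneg x) _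
  have key2' : ‖Matrix.toEuclideanCLM (𝕜 := ℝ)
      (Matrix.of fun i j : Fin d => ∫ y, ψ y * σ (x - y) i j)‖
      ≤ ‖Matrix.toEuclideanCLM (𝕜 := ℝ) (σ x)‖ + ε₀ * ℓ₂ x := by
    rw [hnorm, hnorm]
    exact key2
  have key3 : q * ‖Matrix.toEuclideanCLM (𝕜 := ℝ)
      (Matrix.of fun i j : Fin d => ∫ y, ψ y * σ (x - y) i j)‖ ^ α * ‖x‖ ^ (2 - α)
      ≤ q * (‖Matrix.toEuclideanCLM (𝕜 := ℝ) (σ x)‖ + ε₀ * ℓ₂ x) ^ α * ‖x‖ ^ (2 - α) := by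
    have h := Real.rpow_le_rpow (norm_nonneg _) key2' hα0.le
    exact mul_le_mul_of_nonneg_right (mul_le_mul_of_nonneg_left h hq.le) h2a
  have hd2 := hdiss x hx
  linarith [key1, key3, hd2]
end

section
/- Let d ≥ 1, α ∈ (0,2), β > −α and γ < 1 + β/α. Define b(x) := −x(1+|x|²)^{β/2} and σ(x) := (1+|x|²)^{γ/2} I (so that ‖σ(x)‖^α = (1+|x|²)^{αγ/2}). Then for every q > 0 there exists a constant c₁ > 0 such that for all x ∈ ℝ^d with |x| > 1: ⟨x, b(x)⟩ + q (1+|x|²)^{αγ/2} |x|^{2−α} ≤ −2^{(min(β/2, 0)) − 1} |x|^{2+β} + c₁. -/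
open Real
open scoped RealInnerProductSpace

/-! With `r = |x|`, the drift term is `-(1 + r²)^{β/2} r² ≤ -2^{min(β/2,0)} r^{2+β}` and the noise
term is at most a constant times `r^{αγ + 2 - α}`, since `r² ≤ 1 + r² ≤ 2r²` for `r ≥ 1`.
The condition `γ < 1 + β/α` says exactly that `αγ + 2 - α < 2 + β`, so half of the drift
absorbs the noise up to an additive constant. -/

namespace Real

lemma sq_rpow_div_two {r : ℝ} (hr : 0 ≤ r) (t : ℝ) : (r ^ 2) ^ (t / 2) = r ^ t := by
  rw [rpow_div_two_eq_sqrt t (sq_nonneg r), sqrt_sq hr]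

lemma two_mul_sq_rpow_div_two {r : ℝ} (hr : 0 ≤ r) (t : ℝ) :
    (2 * r ^ 2) ^ (t / 2) = 2 ^ (t / 2) * r ^ t := by
  rw [mul_rpow zero_le_two (sq_nonneg r), sq_rpow_div_two hr]

variable {r : ℝ}

lemma two_rpow_min_mul_rpow_le_one_add_sq_rpow (hr : 1 ≤ r) (t : ℝ) :
    2 ^ min (t / 2) 0 * r ^ t ≤ (1 + r ^ 2) ^ (t / 2) := by
  have hr0 : 0 ≤ r := zero_le_one.trans hr
  rcases le_or_gt 0 t with ht | ht
  · rw [min_eq_right (by linarith), rpow_zero, one_mul, ← sq_rpow_div_two hr0]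
    exact rpow_le_rpow (sq_nonneg r) (by linarith) (by linarith)
  · rw [min_eq_left (by linarith), ← two_mul_sq_rpow_div_two hr0]
    exact rpow_le_rpow_of_nonpos (by positivity) (by nlinarith) (by linarith)

lemma one_add_sq_rpow_le_two_rpow_max_mul_rpow (hr : 1 ≤ r) (t : ℝ) :
    (1 + r ^ 2) ^ (t / 2) ≤ 2 ^ max (t / 2) 0 * r ^ t := by
  have hr0 : 0 ≤ r := zero_le_one.trans hr
  rcases le_or_gt 0 t with ht | ht
  · rw [max_eq_left (by linarith), ← two_mul_sq_rpow_div_two hr0]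
    exact rpow_le_rpow (by positivity) (by nlinarith) (by linarith)
  · rw [max_eq_right (by linarith), rpow_zero, one_mul, ← sq_rpow_div_two hr0]
    exact rpow_le_rpow_of_nonpos (by positivity) (by linarith) (by linarith)

lemma exists_mul_rpow_le_mul_rpow_add {C M p s : ℝ} (hC : 0 < C) (hM : 0 < M) (hps : p < s) :
    ∃ K > 0, ∀ r, 1 ≤ r → C * r ^ p ≤ M * r ^ s + K := by
  set R := max ((C / M) ^ (s - p)⁻¹) 1
  refine ⟨C * R ^ max p 0, by positivity, fun r hr => ?_⟩
  have hr0 : 0 < r := zero_lt_one.trans_le hr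
  rcases le_or_gt ((C / M) ^ (s - p)⁻¹) r with hRr | hrR
  · have hCM : C / M ≤ r ^ (s - p) := by
      calc C / M = ((C / M) ^ (s - p)⁻¹) ^ (s - p) := by
            rw [← rpow_mul (by positivity), inv_mul_cancel₀ (by linarith), rpow_one]
        _ ≤ r ^ (s - p) := rpow_le_rpow (by positivity) hRr (by linarith)
    have hdom : C * r ^ p ≤ M * r ^ s := by
      calc C * r ^ p ≤ M * r ^ (s - p) * r ^ p := by
            gcongr
            rwa [div_le_iff₀' hM] at hCM
        _ = M * r ^ s := by rw [mul_assoc, ← rpow_add hr0, sub_add_cancel]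
    have : 0 ≤ C * R ^ max p 0 := by positivity
    linarith
  · have hbound : r ^ p ≤ R ^ max p 0 :=
      calc r ^ p ≤ r ^ max p 0 := rpow_le_rpow_of_exponent_le hr (le_max_left p 0)
        _ ≤ R ^ max p 0 := rpow_le_rpow hr0.le (hrR.le.trans (le_max_left _ _)) (le_max_right p 0)
    have : 0 ≤ M * r ^ s := by positivity
    nlinarith

end Real

theorem stmt_9_general (d : ℕ) (α β γ : ℝ)
    (hα : α ∈ Set.Ioo (0 : ℝ) 2) (hγ : γ < 1 + β / α)
    (q : ℝ) (hq : 0 < q) :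
    ∃ c₁ > (0 : ℝ), ∀ x : EuclideanSpace ℝ (Fin d), 1 < ‖x‖ →
      ⟪x, -((1 + ‖x‖ ^ 2) ^ (β / 2)) • x⟫ + q * (1 + ‖x‖ ^ 2) ^ (α * γ / 2) * ‖x‖ ^ (2 - α)
        ≤ -2 ^ (min (β / 2) 0 - 1) * ‖x‖ ^ (2 + β) + c₁ := by
  set M : ℝ := 2 ^ (min (β / 2) 0 - 1)
  have hexp : α * γ + (2 - α) < 2 + β := by
    have := mul_lt_mul_of_pos_left hγ hα.1
    rw [mul_add, mul_one, mul_div_cancel₀ _ hα.1.ne'] at this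
    linarith
  obtain ⟨K, hK, habsorb⟩ := exists_mul_rpow_le_mul_rpow_add
    (mul_pos hq (rpow_pos_of_pos two_pos (max (α * γ / 2) 0)))
    (rpow_pos_of_pos two_pos (min (β / 2) 0 - 1)) hexp
  refine ⟨K, hK, fun x hx => ?_⟩
  rw [real_inner_smul_right, real_inner_self_eq_norm_sq]
  set r := ‖x‖
  have hr0 : 0 < r := zero_lt_one.trans hx
  have hdrift : 2 * M * r ^ (2 + β) ≤ (1 + r ^ 2) ^ (β / 2) * r ^ 2 := by
    have h2M : 2 * M = 2 ^ min (β / 2) 0 := by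
      rw [mul_comm, ← rpow_add_one two_ne_zero, sub_add_cancel]
    rw [h2M, rpow_add hr0, rpow_two]
    nlinarith [two_rpow_min_mul_rpow_le_one_add_sq_rpow hx.le β, sq_nonneg r]
  have hnoise : q * (1 + r ^ 2) ^ (α * γ / 2) * r ^ (2 - α)
      ≤ q * 2 ^ max (α * γ / 2) 0 * r ^ (α * γ + (2 - α)) := by
    calc q * (1 + r ^ 2) ^ (α * γ / 2) * r ^ (2 - α)
        ≤ q * (2 ^ max (α * γ / 2) 0 * r ^ (α * γ)) * r ^ (2 - α) := by
          gcongr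
          exact one_add_sq_rpow_le_two_rpow_max_mul_rpow hx.le (α * γ)
      _ = q * 2 ^ max (α * γ / 2) 0 * r ^ (α * γ + (2 - α)) := by rw [rpow_add hr0]; ring
  linarith [habsorb r hx.le]

/-- **Example 1.5 of the paper.** For `α ∈ (0,2)`, `β > -α`,
`γ < 1 + β/α`, `b(x) = -x(1+|x|²)^{β/2}` and `σ(x) = (1+|x|²)^{γ/2} I`
(so `‖σ(x)‖^α = (1+|x|²)^{αγ/2}`), for every `q > 0` there is `c₁ > 0` with
`⟨x, b(x)⟩ + q(1+|x|²)^{αγ/2}|x|^{2-α} ≤ -2^{min(β/2,0)-1}|x|^{2+β} + c₁` for `|x| > 1`. -/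
theorem stmt_9 (d : ℕ) (hd : 1 ≤ d) (α β γ : ℝ)
    (hα : α ∈ Set.Ioo (0 : ℝ) 2) (hβ : -α < β) (hγ : γ < 1 + β / α)
    (q : ℝ) (hq : 0 < q) :
    ∃ c₁ > (0 : ℝ), ∀ x : EuclideanSpace ℝ (Fin d), 1 < ‖x‖ →
      ⟪x, -((1 + ‖x‖ ^ 2) ^ (β / 2)) • x⟫ + q * (1 + ‖x‖ ^ 2) ^ (α * γ / 2) * ‖x‖ ^ (2 - α)
        ≤ -2 ^ (min (β / 2) 0 - 1) * ‖x‖ ^ (2 + β) + c₁ :=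
  stmt_9_general d α β γ hα hγ q hq
end

section
/- Let d ≥ 1, α ∈ (0,2) and β ∈ (α, 2). Define b(x) := −x e^{|x|}, ℓ₁(x) := (1+|x|) e^{|x|+1} and ℓ₂(x) := e^{(|x|+1)/β}. Then for every q > 1 there exist ε₀ ∈ (0,1], c₀ > 0 and c₁ > 0 such that for all x ∈ ℝ^d with |x| > 1: ⟨x, b(x)⟩ + ε₀ ℓ₁(x)|x| + q (e^{|x|/β} + ε₀ ℓ₂(x))^α |x|^{2−α} ≤ −c₀ |x|² e^{|x|} + c₁. -/
open MeasureTheory Real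
open scoped RealInnerProductSpace

lemma stmt_10_absorb (K r : ℝ) (hKpos : 0 < K) (hx : 1 < r) :
    K * Real.exp r ≤ (1/4) * r ^ 2 * Real.exp r + K * Real.exp (K + 1) := by
  by_cases hc : 4 * K ≤ r ^ 2
  · nlinarith [Real.exp_pos r, Real.exp_pos (K + 1)]
  · push_neg at hc
    have hrK : r ≤ K + 1 := by nlinarith [sq_nonneg (K - 1)]
    have hle : Real.exp r ≤ Real.exp (K + 1) := Real.exp_le_exp.mpr hrK
    nlinarith [Real.exp_pos r, sq_nonneg r]

lemma stmt_10_aux (α β q : ℝ) (hα0 : 0 < α) (hα2 : α < 2) (hβα : α < β) (hq : 1 < q) :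
    ∃ ε₀ ∈ Set.Ioc (0 : ℝ) 1, ∃ c₀ > (0 : ℝ), ∃ c₁ > (0 : ℝ),
      ∀ r : ℝ, 1 < r →
        -Real.exp r * r ^ 2 + ε₀ * ((1 + r) * Real.exp (r + 1)) * r
            + q * (Real.exp (r / β) + ε₀ * Real.exp ((r + 1) / β)) ^ α * r ^ (2 - α)
          ≤ -c₀ * r ^ 2 * Real.exp r + c₁ := by
  have hβ0 : 0 < β := hα0.trans hβα
  have hq0 : (0:ℝ) < q := lt_trans one_pos hq
  set ε₀ : ℝ := Real.exp (-2) / 8 with hε₀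
  have hε₀pos : 0 < ε₀ := by positivity
  have hε₀le : ε₀ ≤ 1 := by
    have : Real.exp (-2) ≤ 1 := Real.exp_le_one_iff.mpr (by norm_num)
    rw [hε₀]; linarith
  set C : ℝ := 1 + Real.exp (1 / β) with hC
  have hCpos : 0 < C := by positivity
  set θ : ℝ := α / β with hθ
  have hθ0 : 0 < θ := by positivity
  have hθ1 : θ < 1 := (div_lt_one hβ0).mpr hβα
  set δ : ℝ := 1 - θ with hδ
  have hδ0 : 0 < δ := by simp only [hδ]; linarith
  have hCα : (0:ℝ) < C ^ α := Real.rpow_pos_of_pos hCpos α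
  set K : ℝ := 4 * q * C ^ α / δ ^ 2 with hK
  have hKpos : 0 < K := by rw [hK]; positivity
  clear_value ε₀ C θ δ K
  refine ⟨ε₀, ⟨hε₀pos, hε₀le⟩, 1/2, by norm_num, K * Real.exp (K + 1), by positivity,
    fun r hx => ?_⟩
  have hr0 : 0 < r := lt_trans one_pos hx
  have hexp : ∀ s : ℝ, 0 ≤ s → s ^ 2 / 4 ≤ Real.exp s := by
    intro s hs
    have h1 : s / 2 + 1 ≤ Real.exp (s / 2) := Real.add_one_le_exp _
    have h2 : Real.exp (s / 2) * Real.exp (s / 2) = Real.exp s := by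
      rw [← Real.exp_add]; ring_nf
    nlinarith [Real.exp_pos (s / 2)]
  -- second term
  have h2 : ε₀ * ((1 + r) * Real.exp (r + 1)) * r ≤ (1/4) * r ^ 2 * Real.exp r := by
    have he1 : Real.exp (r + 1) = Real.exp r * Real.exp 1 := Real.exp_add r 1
    have he2 : Real.exp (-2) * Real.exp 1 ≤ 1 := by
      rw [← Real.exp_add]; exact Real.exp_le_one_iff.mpr (by norm_num)
    have hA : Real.exp (-2) * Real.exp 1 * ((1 + r) * r) ≤ 1 * (2 * r * r) :=
      mul_le_mul he2 (by nlinarith) (by positivity) one_pos.le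
    calc ε₀ * ((1 + r) * Real.exp (r + 1)) * r
        = (Real.exp (-2) * Real.exp 1 * ((1 + r) * r)) * (Real.exp r / 8) := by
          rw [hε₀, he1]; ring
      _ ≤ (1 * (2 * r * r)) * (Real.exp r / 8) :=
          mul_le_mul_of_nonneg_right hA (by positivity)
      _ ≤ (1/4) * r ^ 2 * Real.exp r := by nlinarith [Real.exp_pos r]
  -- third term
  have h3 : q * (Real.exp (r / β) + ε₀ * Real.exp ((r + 1) / β)) ^ α * r ^ (2 - α)
      ≤ K * Real.exp r := by
    have hS : Real.exp (r / β) + ε₀ * Real.exp ((r + 1) / β) ≤ C * Real.exp (r / β) := by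
      have he : Real.exp ((r + 1) / β) = Real.exp (r / β) * Real.exp (1 / β) := by
        rw [← Real.exp_add, ← add_div]
      have hmul : ε₀ * (Real.exp (r / β) * Real.exp (1 / β))
          ≤ 1 * (Real.exp (r / β) * Real.exp (1 / β)) :=
        mul_le_mul_of_nonneg_right hε₀le (by positivity)
      rw [he, hC]; nlinarith
    have hSnn : (0:ℝ) ≤ Real.exp (r / β) + ε₀ * Real.exp ((r + 1) / β) := by positivity
    have hSα : (Real.exp (r / β) + ε₀ * Real.exp ((r + 1) / β)) ^ α
        ≤ C ^ α * Real.exp (θ * r) := by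
      calc (Real.exp (r / β) + ε₀ * Real.exp ((r + 1) / β)) ^ α
          ≤ (C * Real.exp (r / β)) ^ α := Real.rpow_le_rpow hSnn hS hα0.le
        _ = C ^ α * (Real.exp (r / β)) ^ α :=
            Real.mul_rpow hCpos.le (Real.exp_pos _).le
        _ = C ^ α * Real.exp (θ * r) := by
            rw [← Real.exp_mul, hθ]; ring_nf
    have hrα : r ^ (2 - α) ≤ r ^ 2 := by
      calc r ^ (2 - α) ≤ r ^ (2:ℝ) :=
            Real.rpow_le_rpow_of_exponent_le hx.le (by linarith)
        _ = r ^ 2 := Real.rpow_two r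
    have hd1 : Real.exp (θ * r) * r ^ 2 ≤ 4 / δ ^ 2 * Real.exp r := by
      have hδr : (δ * r) ^ 2 / 4 ≤ Real.exp (δ * r) := hexp _ (by positivity)
      have hsplit : Real.exp (θ * r) * Real.exp (δ * r) = Real.exp r := by
        rw [← Real.exp_add, hδ]; ring_nf
      have h4 : Real.exp (θ * r) * ((δ * r) ^ 2 / 4) ≤ Real.exp r := by
        calc Real.exp (θ * r) * ((δ * r) ^ 2 / 4)
            ≤ Real.exp (θ * r) * Real.exp (δ * r) :=
              mul_le_mul_of_nonneg_left hδr (Real.exp_pos _).le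
          _ = Real.exp r := hsplit
      have heq : Real.exp (θ * r) * r ^ 2
          = (Real.exp (θ * r) * ((δ * r) ^ 2 / 4)) * (4 / δ ^ 2) := by
        field_simp
      rw [heq]
      calc (Real.exp (θ * r) * ((δ * r) ^ 2 / 4)) * (4 / δ ^ 2)
          ≤ Real.exp r * (4 / δ ^ 2) :=
            mul_le_mul_of_nonneg_right h4 (by positivity)
        _ = 4 / δ ^ 2 * Real.exp r := by ring
    calc q * (Real.exp (r / β) + ε₀ * Real.exp ((r + 1) / β)) ^ α * r ^ (2 - α)
        ≤ q * (C ^ α * Real.exp (θ * r)) * r ^ 2 :=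
          mul_le_mul (mul_le_mul_of_nonneg_left hSα hq0.le) hrα
            (Real.rpow_nonneg hr0.le _) (by positivity)
      _ = q * C ^ α * (Real.exp (θ * r) * r ^ 2) := by ring
      _ ≤ q * C ^ α * (4 / δ ^ 2 * Real.exp r) :=
          mul_le_mul_of_nonneg_left hd1 (by positivity)
      _ = K * Real.exp r := by rw [hK]; ring
  linarith [h2, h3, stmt_10_absorb K r hKpos hx]

/-- **Example 1.6 of the paper.** For `α ∈ (0,2)`, `β ∈ (α,2)`,
`b(x) = -x e^{|x|}`, `ℓ₁(x) = (1+|x|)e^{|x|+1}`, `ℓ₂(x) = e^{(|x|+1)/β}` and every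
`q > 1`, there are `ε₀ ∈ (0,1]`, `c₀ > 0`, `c₁ > 0` such that for all `|x| > 1`:
`⟨x, b(x)⟩ + ε₀ℓ₁(x)|x| + q(e^{|x|/β} + ε₀ℓ₂(x))^α |x|^{2-α} ≤ -c₀|x|²e^{|x|} + c₁`. -/
theorem stmt_10 (d : ℕ) (hd : 1 ≤ d) (α β : ℝ)
    (hα : α ∈ Set.Ioo (0 : ℝ) 2) (hβ : β ∈ Set.Ioo α 2) (q : ℝ) (hq : 1 < q) :
    ∃ ε₀ ∈ Set.Ioc (0 : ℝ) 1, ∃ c₀ > (0 : ℝ), ∃ c₁ > (0 : ℝ),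
      ∀ x : EuclideanSpace ℝ (Fin d), 1 < ‖x‖ →
        ⟪x, -Real.exp ‖x‖ • x⟫ + ε₀ * ((1 + ‖x‖) * Real.exp (‖x‖ + 1)) * ‖x‖
            + q * (Real.exp (‖x‖ / β) + ε₀ * Real.exp ((‖x‖ + 1) / β)) ^ α * ‖x‖ ^ (2 - α)
          ≤ -c₀ * ‖x‖ ^ 2 * Real.exp ‖x‖ + c₁ := by
  obtain ⟨ε₀, hε₀, c₀, hc₀, c₁, hc₁, h⟩ := stmt_10_aux α β q hα.1 hα.2 hβ.1 hq
  refine ⟨ε₀, hε₀, c₀, hc₀, c₁, hc₁, fun x hx => ?_⟩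
  have hip : ⟪x, -Real.exp ‖x‖ • x⟫ = -Real.exp ‖x‖ * ‖x‖ ^ 2 := by
    rw [real_inner_smul_right, real_inner_self_eq_norm_sq]
  rw [hip]
  exact h ‖x‖ hx
end

section
/- Let d ≥ 1 and α ∈ (0,2). For all x, y ∈ ℝ^d with |x| ≥ 1 and ⟨x, y⟩ ≥ 0, one has ρ_α(x−y) − ρ_α(x+y) ≥ 2(d+α) ⟨x, y⟩ |x|^{−2} (1 + 4|x|^{−2}⟨x, y⟩ + |x−y|²)^{−(d+α)/2 − 1}. -/
open MeasureTheory Real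
open scoped RealInnerProductSpace

noncomputable section

/-- `ρ_α(x) = (1+|x|²)^{-(d+α)/2}`. -/
def rhoA (d : ℕ) (α : ℝ) (x : EuclideanSpace ℝ (Fin d)) : ℝ :=
  (1 + ‖x‖ ^ 2) ^ (-(((d : ℝ) + α) / 2))

lemma key_rpow_ineq {a M p : ℝ} (ha : 0 < a) (haM : a ≤ M) (hp : 0 < p) :
    p * (M - a) * M ^ (-p - 1) ≤ a ^ (-p) - M ^ (-p) := by
  have hM : 0 < M := ha.trans_le haM
  have hr1 : (1 : ℝ) ≤ M / a := (one_le_div ha).2 haM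
  have hB : 1 + (p + 1) * (M / a - 1) ≤ (M / a) ^ (p + 1) := by
    have := one_add_mul_self_le_rpow_one_add (s := M / a - 1) (by linarith) (p := p + 1)
      (by linarith)
    simpa using this
  have hdiv : (M / a) ^ (p + 1) = M ^ (p + 1) / a ^ (p + 1) :=
    Real.div_rpow hM.le ha.le _
  have hap : (0 : ℝ) < a ^ p := Real.rpow_pos_of_pos ha p
  have hap1 : (0 : ℝ) < a ^ (p + 1) := Real.rpow_pos_of_pos ha (p + 1)
  have hMp : (0 : ℝ) < M ^ p := Real.rpow_pos_of_pos hM p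
  have hMp1 : (0 : ℝ) < M ^ (p + 1) := Real.rpow_pos_of_pos hM (p + 1)
  have hape : a ^ (p + 1) = a ^ p * a := by rw [Real.rpow_add ha, Real.rpow_one]
  have hMpe : M ^ (p + 1) = M ^ p * M := by rw [Real.rpow_add hM, Real.rpow_one]
  have h1 : a ^ p * ((p + 1) * M - p * a) ≤ M ^ (p + 1) := by
    rw [hdiv] at hB
    have := (le_div_iff₀ hap1).1 hB
    calc a ^ p * ((p + 1) * M - p * a)
        = (1 + (p + 1) * (M / a - 1)) * a ^ (p + 1) := by
          rw [hape]; field_simp; ring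
      _ ≤ M ^ (p + 1) := this
  have hneg : a ^ (-p) = (a ^ p)⁻¹ := by rw [Real.rpow_neg ha.le]
  have hnegM : M ^ (-p) = (M ^ p)⁻¹ := by rw [Real.rpow_neg hM.le]
  have hnegM1 : M ^ (-p - 1) = (M ^ (p + 1))⁻¹ := by
    rw [show -p - 1 = -(p + 1) by ring, Real.rpow_neg hM.le]
  rw [hneg, hnegM, hnegM1]
  have heq : (a ^ p)⁻¹ - (M ^ p)⁻¹ - p * (M - a) * (M ^ (p + 1))⁻¹
      = (M ^ (p + 1) - a ^ p * ((p + 1) * M - p * a)) / (a ^ p * M ^ (p + 1)) := by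
    field_simp
    rw [hMpe]
    ring
  have : 0 ≤ (a ^ p)⁻¹ - (M ^ p)⁻¹ - p * (M - a) * (M ^ (p + 1))⁻¹ := by
    rw [heq]
    exact div_nonneg (by linarith) (by positivity)
  linarith

/-- For `|x| ≥ 1` and `⟨x,y⟩ ≥ 0`:
`ρ_α(x-y) - ρ_α(x+y) ≥ 2(d+α)⟨x,y⟩|x|^{-2} (1 + 4|x|^{-2}⟨x,y⟩ + |x-y|²)^{-(d+α)/2-1}`. -/
theorem stmt_15 (d : ℕ) (hd : 1 ≤ d) (α : ℝ) (hα : α ∈ Set.Ioo (0 : ℝ) 2)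
    (x y : EuclideanSpace ℝ (Fin d)) (hx : 1 ≤ ‖x‖) (hxy : 0 ≤ ⟪x, y⟫) :
    2 * ((d : ℝ) + α) * ⟪x, y⟫ * ‖x‖ ^ (-(2 : ℝ))
        * (1 + 4 * ‖x‖ ^ (-(2 : ℝ)) * ⟪x, y⟫ + ‖x - y‖ ^ 2) ^ (-(((d : ℝ) + α) / 2) - 1)
      ≤ rhoA d α (x - y) - rhoA d α (x + y) := by
  obtain ⟨hα0, hα2⟩ := hα
  set t : ℝ := ⟪x, y⟫ with ht
  set p : ℝ := ((d : ℝ) + α) / 2 with hpdef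
  have hd1 : (1 : ℝ) ≤ (d : ℝ) := by exact_mod_cast hd
  have hp : 0 < p := by rw [hpdef]; positivity
  have hx0 : (0 : ℝ) < ‖x‖ := lt_of_lt_of_le one_pos hx
  set w : ℝ := ‖x‖ ^ (-(2 : ℝ)) with hw
  have hw_pos : 0 < w := Real.rpow_pos_of_pos hx0 _
  have hw_le : w ≤ 1 := Real.rpow_le_one_of_one_le_of_nonpos hx (by norm_num)
  set a : ℝ := 1 + ‖x - y‖ ^ 2 with hadef
  set b : ℝ := 1 + ‖x + y‖ ^ 2 with hbdef
  set M : ℝ := 1 + 4 * w * t + ‖x - y‖ ^ 2 with hMdef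
  have ha1 : (1 : ℝ) ≤ a := le_add_of_nonneg_right (sq_nonneg _)
  have ha : (0 : ℝ) < a := lt_of_lt_of_le one_pos ha1
  have hMa : a ≤ M := by rw [hadef, hMdef]; nlinarith [mul_nonneg hw_pos.le hxy]
  have hM : (0 : ℝ) < M := ha.trans_le hMa
  have hb_eq : b = a + 4 * t := by
    rw [hbdef, hadef, ht, norm_add_sq_real, norm_sub_sq_real]; ring
  have hMb : M ≤ b := by
    rw [hMdef, hb_eq, hadef]
    nlinarith [mul_le_of_le_one_left hxy hw_le]
  have key := key_rpow_ineq ha hMa hp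
  have hMbpow : b ^ (-p) ≤ M ^ (-p) :=
    Real.rpow_le_rpow_of_nonpos hM hMb (by linarith)
  have hrho1 : rhoA d α (x - y) = a ^ (-p) := rfl
  have hrho2 : rhoA d α (x + y) = b ^ (-p) := rfl
  have hLHS : 2 * ((d : ℝ) + α) * t * w * M ^ (-p - 1) = p * (M - a) * M ^ (-p - 1) := by
    rw [hpdef, hMdef, hadef]; ring
  rw [hrho1, hrho2, hLHS]
  linarith
end
end

section
/- Let d ≥ 1, α ∈ (0,2), β > 0, C₀ > 0 and κ₁ > 0. Let U : ℝ^d → ℝ satisfy U(x) ≥ (d+β) log|x| − C₀ for all |x| ≥ 1, and assume that ⟨x, B(x)⟩ ≤ −κ₁ |x|^{2−d−α} for all |x| > 1. Define b(x) := B(x) e^{U(x)}. Then for every q > 0 and every x ∈ ℝ^d with |x| ≥ max((2q/κ₁)^{1/α}, 1): ⟨x, b(x)⟩ + q ρ_α(x) e^{U(x)} |x|^{2−α} ≤ −(κ₁/(2 e^{C₀})) |x|^{2+β−α}. -/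
open MeasureTheory Real

noncomputable section

/-- `c_{d,α} = 2^α Γ((d+α)/2) / (Γ(d/2) Γ((2-α)/2))`. -/
def cdA (d : ℕ) (α : ℝ) : ℝ :=
  2 ^ α * Real.Gamma (((d : ℝ) + α) / 2)
    / (Real.Gamma ((d : ℝ) / 2) * Real.Gamma ((2 - α) / 2))

/-- `B(x) = c_{d,α} ∫ y (ρ_α(x+y) - ρ_α(x-y)) |y|^{-d-α} dy`. -/
def fieldB (d : ℕ) (α : ℝ) (x : EuclideanSpace ℝ (Fin d)) : EuclideanSpace ℝ (Fin d) :=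
  cdA d α • ∫ y : EuclideanSpace ℝ (Fin d),
    ((rhoA d α (x + y) - rhoA d α (x - y)) * ‖y‖ ^ (-(d : ℝ) - α)) • y


open scoped RealInnerProductSpace

/-!
Multiplying the drift bound by `e^U ≥ |x|^{d+β} e^{-C₀}` gives the right-hand side with `κ₁` in
place of `κ₁/2`; the remaining half absorbs the `q`-term, because `ρ_α(x) ≤ |x|^{-d-α}` and
`q|x|^{-α} ≤ κ₁/2` beyond the threshold. The drift bound is only assumed for `|x| > 1`; it extends
to the unit sphere since `B` is continuous, by dominated convergence: the integrand is bounded by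
`C|y|^{2-d-α}` near the origin (ρ_α is Lipschitz) and by `C ρ_α(y)` far away.
-/

open scoped Topology
open Metric

lemma abs_rpow_neg_sub_rpow_neg_le {s : ℝ} (hs : 0 ≤ s) {u v : ℝ} (hu : 1 ≤ u) (hv : 1 ≤ v) :
    |u ^ (-s) - v ^ (-s)| ≤ s * |u - v| := by
  have hder : ∀ t ∈ Set.Ici (1 : ℝ),
      HasDerivWithinAt (fun t : ℝ => t ^ (-s)) (-s * t ^ (-s - 1)) (Set.Ici 1) t := fun t ht =>
    (Real.hasDerivAt_rpow_const (Or.inl (by linarith [ht.out] : t ≠ 0))).hasDerivWithinAt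
  have hbound : ∀ t ∈ Set.Ici (1 : ℝ), ‖-s * t ^ (-s - 1)‖ ≤ s := by
    intro t ht
    rw [norm_mul, norm_neg, Real.norm_of_nonneg hs,
      Real.norm_of_nonneg (Real.rpow_nonneg (by linarith [ht.out]) _)]
    exact mul_le_of_le_one_right hs (Real.rpow_le_one_of_one_le_of_nonpos ht.out (by linarith))
  simpa [Real.norm_eq_abs] using Convex.norm_image_sub_le_of_norm_hasDerivWithin_le hder hbound
    (convex_Ici 1) (Set.mem_Ici.2 hv) (Set.mem_Ici.2 hu)

lemma rpow_div_exp_le_exp {r a c u : ℝ} (hr : 0 < r) (h : a * Real.log r - c ≤ u) :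
    r ^ a / Real.exp c ≤ Real.exp u := by
  rw [Real.rpow_def_of_pos hr, ← Real.exp_sub, mul_comm]
  exact Real.exp_le_exp.2 h

section Rho

variable {d : ℕ} {α : ℝ}

lemma rhoA_nonneg (x : EuclideanSpace ℝ (Fin d)) : 0 ≤ rhoA d α x :=
  Real.rpow_nonneg (by positivity) _

@[fun_prop]
lemma continuous_rhoA : Continuous (rhoA d α) :=
  Continuous.rpow_const (by fun_prop) fun _ => Or.inl (by positivity)

lemma integrable_rhoA (hα : 0 < α) : Integrable (rhoA d α) := by
  have := integrable_rpow_neg_one_add_norm_sq (E := EuclideanSpace ℝ (Fin d)) (μ := volume)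
    (r := (d : ℝ) + α) (by rw [finrank_euclideanSpace_fin]; linarith)
  convert this using 2 with x
  rw [rhoA, neg_div]

lemma rhoA_le_rpow_norm (hα : 0 ≤ α) {z : EuclideanSpace ℝ (Fin d)} (hz : z ≠ 0) :
    rhoA d α z ≤ ‖z‖ ^ (-((d : ℝ) + α)) := by
  calc rhoA d α z ≤ (‖z‖ ^ 2) ^ (-(((d : ℝ) + α) / 2)) :=
        Real.rpow_le_rpow_of_nonpos (by positivity) (by linarith) (by
          rw [neg_nonpos]; positivity)
    _ = ‖z‖ ^ (-((d : ℝ) + α)) := by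
        rw [← Real.rpow_natCast ‖z‖ 2, ← Real.rpow_mul (norm_nonneg z)]
        ring_nf

lemma rhoA_le_two_rpow_mul_rhoA (hα : 0 ≤ α) {z w : EuclideanSpace ℝ (Fin d)}
    (h : ‖w‖ ≤ 2 * ‖z‖) : rhoA d α z ≤ 2 ^ ((d : ℝ) + α) * rhoA d α w := by
  have hs : 0 ≤ ((d : ℝ) + α) / 2 := by positivity
  have hw : (1 + ‖w‖ ^ 2) / 4 ≤ 1 + ‖z‖ ^ 2 := by nlinarith [norm_nonneg w]
  calc rhoA d α z ≤ ((1 + ‖w‖ ^ 2) / 4) ^ (-(((d : ℝ) + α) / 2)) :=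
        Real.rpow_le_rpow_of_nonpos (by positivity) hw (by linarith)
    _ = (2 ^ (2 : ℝ)) ^ (((d : ℝ) + α) / 2) * rhoA d α w := by
        rw [Real.div_rpow (by positivity) (by norm_num), div_eq_mul_inv,
          ← Real.rpow_neg (by norm_num), neg_neg, rhoA, mul_comm]
        norm_num
    _ = 2 ^ ((d : ℝ) + α) * rhoA d α w := by
        rw [← Real.rpow_mul (by norm_num)]
        ring_nf

lemma abs_rhoA_add_sub_rhoA_sub_le (hα : 0 ≤ α) (x y : EuclideanSpace ℝ (Fin d)) :
    |rhoA d α (x + y) - rhoA d α (x - y)| ≤ 2 * ((d : ℝ) + α) * (‖x‖ * ‖y‖) := by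
  have hdiff : (1 + ‖x + y‖ ^ 2) - (1 + ‖x - y‖ ^ 2) = 4 * ⟪x, y⟫ := by
    rw [norm_add_sq_real, norm_sub_sq_real]; ring
  calc |rhoA d α (x + y) - rhoA d α (x - y)|
      ≤ ((d : ℝ) + α) / 2 * |(1 + ‖x + y‖ ^ 2) - (1 + ‖x - y‖ ^ 2)| :=
        abs_rpow_neg_sub_rpow_neg_le (by positivity) (by nlinarith) (by nlinarith)
    _ = 2 * ((d : ℝ) + α) * |⟪x, y⟫| := by rw [hdiff, abs_mul]; norm_num; ring
    _ ≤ 2 * ((d : ℝ) + α) * (‖x‖ * ‖y‖) := by gcongr; exact abs_real_inner_le_norm x y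

end Rho

section FieldB

variable (d : ℕ) (α : ℝ)

def fieldBIntegrand (x y : EuclideanSpace ℝ (Fin d)) : EuclideanSpace ℝ (Fin d) :=
  ((rhoA d α (x + y) - rhoA d α (x - y)) * ‖y‖ ^ (-(d : ℝ) - α)) • y

variable {d α}

lemma norm_fieldBIntegrand (x y : EuclideanSpace ℝ (Fin d)) :
    ‖fieldBIntegrand d α x y‖ =
      |rhoA d α (x + y) - rhoA d α (x - y)| * (‖y‖ ^ (-(d : ℝ) - α) * ‖y‖) := by
  rw [fieldBIntegrand, norm_smul, Real.norm_eq_abs, abs_mul,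
    abs_of_nonneg (Real.rpow_nonneg (norm_nonneg y) _), mul_assoc]

lemma norm_fieldBIntegrand_le (hα : 0 ≤ α) (x y : EuclideanSpace ℝ (Fin d)) :
    ‖fieldBIntegrand d α x y‖ ≤ 2 * ((d : ℝ) + α) * ‖x‖ * ‖y‖ ^ (2 - (d : ℝ) - α) := by
  rcases eq_or_ne y 0 with rfl | hy0
  · simp only [fieldBIntegrand, smul_zero, norm_zero]
    positivity
  have hy : 0 < ‖y‖ := norm_pos_iff.2 hy0
  have hpow : ‖y‖ * (‖y‖ ^ (-(d : ℝ) - α) * ‖y‖) = ‖y‖ ^ (2 - (d : ℝ) - α) := by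
    rw [show 2 - (d : ℝ) - α = 1 + (-(d : ℝ) - α) + 1 by ring, Real.rpow_add hy,
      Real.rpow_add hy, Real.rpow_one]
    ring
  rw [norm_fieldBIntegrand, ← hpow]
  calc |rhoA d α (x + y) - rhoA d α (x - y)| * (‖y‖ ^ (-(d : ℝ) - α) * ‖y‖)
      ≤ 2 * ((d : ℝ) + α) * (‖x‖ * ‖y‖) * (‖y‖ ^ (-(d : ℝ) - α) * ‖y‖) := by
        gcongr
        exact abs_rhoA_add_sub_rhoA_sub_le hα x y
    _ = _ := by ring

lemma norm_fieldBIntegrand_le_of_two_mul_norm_le (hd : 1 ≤ d) (hα : 0 ≤ α)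
    {x y : EuclideanSpace ℝ (Fin d)} (hy : 1 ≤ ‖y‖) (hxy : 2 * ‖x‖ ≤ ‖y‖) :
    ‖fieldBIntegrand d α x y‖ ≤ 2 * 2 ^ ((d : ℝ) + α) * rhoA d α y := by
  have hd1 : (1 : ℝ) ≤ d := by exact_mod_cast hd
  have hplus : ‖y‖ ≤ 2 * ‖x + y‖ := by
    have := norm_sub_le (x + y) x
    rw [add_sub_cancel_left] at this
    linarith
  have hminus : ‖y‖ ≤ 2 * ‖x - y‖ := by
    have := norm_sub_le x (x - y)
    rw [sub_sub_cancel] at this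
    linarith
  have hdiff : |rhoA d α (x + y) - rhoA d α (x - y)| ≤ rhoA d α (x + y) + rhoA d α (x - y) :=
    abs_sub_le_iff.2 ⟨by linarith [rhoA_nonneg (α := α) (x - y)],
      by linarith [rhoA_nonneg (α := α) (x + y)]⟩
  have hdecay : ‖y‖ ^ (-(d : ℝ) - α) * ‖y‖ ≤ 1 := by
    rw [← Real.rpow_add_one (by positivity)]
    exact Real.rpow_le_one_of_one_le_of_nonpos hy (by linarith)
  rw [norm_fieldBIntegrand]
  calc |rhoA d α (x + y) - rhoA d α (x - y)| * (‖y‖ ^ (-(d : ℝ) - α) * ‖y‖)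
      ≤ (rhoA d α (x + y) + rhoA d α (x - y)) * 1 :=
        mul_le_mul hdiff hdecay (by positivity) (add_nonneg (rhoA_nonneg _) (rhoA_nonneg _))
    _ ≤ 2 ^ ((d : ℝ) + α) * rhoA d α y + 2 ^ ((d : ℝ) + α) * rhoA d α y := by
        rw [mul_one]
        gcongr <;> exact rhoA_le_two_rpow_mul_rhoA hα ‹_›
    _ = 2 * 2 ^ ((d : ℝ) + α) * rhoA d α y := by ring

variable (d α) in
def fieldBDominant (R : ℝ) (y : EuclideanSpace ℝ (Fin d)) : ℝ :=
  (ball 0 (2 * R)).indicator (fun y => 2 * ((d : ℝ) + α) * R * ‖y‖ ^ (2 - (d : ℝ) - α)) y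
    + 2 * 2 ^ ((d : ℝ) + α) * rhoA d α y

lemma integrable_fieldBDominant (hd : 1 ≤ d) (hα : 0 < α) (hα2 : α < 2) (R : ℝ) :
    Integrable (fieldBDominant d α R) := by
  have hfinrank : Module.finrank ℝ (EuclideanSpace ℝ (Fin d)) = d := finrank_euclideanSpace_fin
  have hsingular : IntegrableOn (fun y : EuclideanSpace ℝ (Fin d) => ‖y‖ ^ (2 - (d : ℝ) - α))
      (ball 0 (2 * R)) := by
    refine integrableOn_ball_of_norm_le_rpow (C := 1) (α := (d : ℝ) + α - 2) (by omega)
      (by rw [hfinrank]; linarith) (ae_of_all _ fun y => ?_)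
      (measurable_norm.pow_const _).aestronglyMeasurable
    rw [Real.norm_of_nonneg (by positivity), one_mul, neg_sub, sub_sub]
  exact (IntegrableOn.integrable_indicator (hsingular.const_mul _) measurableSet_ball).add
    ((integrable_rhoA hα).const_mul _)

lemma norm_fieldBIntegrand_le_fieldBDominant (hd : 1 ≤ d) (hα : 0 ≤ α) {R : ℝ} (hR : 1 ≤ 2 * R)
    {x : EuclideanSpace ℝ (Fin d)} (hx : ‖x‖ ≤ R) (y : EuclideanSpace ℝ (Fin d)) :
    ‖fieldBIntegrand d α x y‖ ≤ fieldBDominant d α R y := by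
  by_cases hy : y ∈ ball 0 (2 * R)
  · have hnear : 2 * ((d : ℝ) + α) * ‖x‖ * ‖y‖ ^ (2 - (d : ℝ) - α)
        ≤ 2 * ((d : ℝ) + α) * R * ‖y‖ ^ (2 - (d : ℝ) - α) := by gcongr
    have hfar : 0 ≤ 2 * 2 ^ ((d : ℝ) + α) * rhoA d α y := by
      have := rhoA_nonneg (α := α) y
      positivity
    rw [fieldBDominant, Set.indicator_of_mem hy]
    linarith [norm_fieldBIntegrand_le hα x y]
  · rw [fieldBDominant, Set.indicator_of_notMem hy, zero_add]
    rw [mem_ball_zero_iff, not_lt] at hy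
    exact norm_fieldBIntegrand_le_of_two_mul_norm_le hd hα (by linarith) (by linarith)

lemma aestronglyMeasurable_fieldBIntegrand (x : EuclideanSpace ℝ (Fin d)) :
    AEStronglyMeasurable (fieldBIntegrand d α x) :=
  (((continuous_rhoA.comp (continuous_const.add continuous_id)).sub
    (continuous_rhoA.comp (continuous_const.sub continuous_id))).measurable.mul
    (measurable_norm.pow_const _) |>.smul measurable_id).aestronglyMeasurable

lemma continuous_fieldB (hd : 1 ≤ d) (hα : 0 < α) (hα2 : α < 2) : Continuous (fieldB d α) := by
  refine continuous_iff_continuousAt.2 fun x₀ => ?_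
  have hdom : ∀ᶠ x in 𝓝 x₀, ∀ᵐ y,
      ‖fieldBIntegrand d α x y‖ ≤ fieldBDominant d α (‖x₀‖ + 1) y := by
    filter_upwards [ball_mem_nhds x₀ one_pos] with x hx
    have hxR : ‖x‖ ≤ ‖x₀‖ + 1 := by
      linarith [norm_le_norm_add_norm_sub' x x₀, mem_ball_iff_norm.1 hx]
    exact ae_of_all _ (norm_fieldBIntegrand_le_fieldBDominant hd hα.le
      (by linarith [norm_nonneg x₀]) hxR)
  have hcont : ∀ y, ContinuousAt (fun x => fieldBIntegrand d α x y) x₀ := fun y => by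
    unfold fieldBIntegrand
    fun_prop
  show ContinuousAt (fun x => cdA d α • ∫ y, fieldBIntegrand d α x y) x₀
  exact (continuousAt_of_dominated (.of_forall aestronglyMeasurable_fieldBIntegrand) hdom
    (integrable_fieldBDominant hd hα hα2 _) (ae_of_all _ hcont)).const_smul (cdA d α)

end FieldB

lemma inner_fieldB_le_of_one_le_norm {d : ℕ} (hd : 1 ≤ d) {α κ : ℝ} (hα : 0 < α) (hα2 : α < 2)
    (hB : ∀ x : EuclideanSpace ℝ (Fin d), 1 < ‖x‖ →
      ⟪x, fieldB d α x⟫ ≤ -κ * ‖x‖ ^ (2 - (d : ℝ) - α))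
    {x : EuclideanSpace ℝ (Fin d)} (hx : 1 ≤ ‖x‖) :
    ⟪x, fieldB d α x⟫ ≤ -κ * ‖x‖ ^ (2 - (d : ℝ) - α) := by
  rcases hx.lt_or_eq with hx | hx
  · exact hB x hx
  have hx0 : ‖x‖ ≠ 0 := by rw [← hx]; exact one_ne_zero
  have hmem : x ∈ closure (closedBall (0 : EuclideanSpace ℝ (Fin d)) 1)ᶜ := by
    refine frontier_subset_closure ?_
    rw [frontier_compl, frontier_closedBall _ one_ne_zero, mem_sphere_zero_iff_norm, hx]
  refine ContinuousWithinAt.closure_le hmem ?_ ?_ fun y hy => hB y (by simpa using hy)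
  · exact (continuous_id.inner (continuous_fieldB hd hα hα2)).continuousWithinAt
  · exact (continuousAt_const.mul
      (continuous_norm.continuousAt.rpow_const (Or.inl hx0))).continuousWithinAt

lemma mul_rhoA_mul_rpow_le {d : ℕ} {α q κ : ℝ} (hα : 0 < α) (hq : 0 ≤ q) (hκ : 0 < κ)
    {x : EuclideanSpace ℝ (Fin d)} (hx0 : x ≠ 0) (hx : (2 * q / κ) ^ (1 / α) ≤ ‖x‖) :
    q * rhoA d α x * ‖x‖ ^ (2 - α) ≤ κ / 2 * ‖x‖ ^ (2 - (d : ℝ) - α) := by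
  have hr : 0 < ‖x‖ := norm_pos_iff.2 hx0
  have hq_le : q ≤ κ / 2 * ‖x‖ ^ α := by
    have := Real.rpow_le_rpow (by positivity) hx hα.le
    rw [← Real.rpow_mul (by positivity), one_div_mul_cancel hα.ne', Real.rpow_one,
      div_le_iff₀ hκ] at this
    linarith
  calc q * rhoA d α x * ‖x‖ ^ (2 - α)
      ≤ q * ‖x‖ ^ (-((d : ℝ) + α)) * ‖x‖ ^ (2 - α) := by
        gcongr
        exact rhoA_le_rpow_norm hα.le hx0
    _ = q * ‖x‖ ^ (-α) * ‖x‖ ^ (2 - (d : ℝ) - α) := by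
        rw [mul_assoc, mul_assoc, ← Real.rpow_add hr, ← Real.rpow_add hr]
        ring_nf
    _ ≤ κ / 2 * ‖x‖ ^ α * ‖x‖ ^ (-α) * ‖x‖ ^ (2 - (d : ℝ) - α) := by gcongr
    _ = κ / 2 * ‖x‖ ^ (2 - (d : ℝ) - α) := by
        rw [mul_assoc (κ / 2), ← Real.rpow_add hr, add_neg_cancel, Real.rpow_zero, mul_one]

theorem stmt_18_general (d : ℕ) (hd : 1 ≤ d) (α β C₀ κ₁ : ℝ)
    (hα : α ∈ Set.Ioo (0 : ℝ) 2) (hκ₁ : 0 < κ₁)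
    (U : EuclideanSpace ℝ (Fin d) → ℝ)
    (hU : ∀ x : EuclideanSpace ℝ (Fin d), 1 ≤ ‖x‖ →
      ((d : ℝ) + β) * Real.log ‖x‖ - C₀ ≤ U x)
    (hB : ∀ x : EuclideanSpace ℝ (Fin d), 1 < ‖x‖ →
      ⟪x, fieldB d α x⟫ ≤ -κ₁ * ‖x‖ ^ (2 - (d : ℝ) - α)) :
    ∀ q : ℝ, 0 < q → ∀ x : EuclideanSpace ℝ (Fin d),
      max ((2 * q / κ₁) ^ (1 / α)) 1 ≤ ‖x‖ →
      ⟪x, Real.exp (U x) • fieldB d α x⟫ + q * rhoA d α x * Real.exp (U x) * ‖x‖ ^ (2 - α)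
        ≤ -(κ₁ / (2 * Real.exp C₀)) * ‖x‖ ^ (2 + β - α) := by
  intro q hq x hx
  obtain ⟨hα0, hα2⟩ := hα
  have hx1 : 1 ≤ ‖x‖ := (le_max_right _ _).trans hx
  have hr : 0 < ‖x‖ := one_pos.trans_le hx1
  have hdrift := inner_fieldB_le_of_one_le_norm hd hα0 hα2 hB hx1
  have hjump := mul_rhoA_mul_rpow_le hα0 hq.le hκ₁ (norm_pos_iff.1 hr) ((le_max_left _ _).trans hx)
  have hexp := rpow_div_exp_le_exp hr (hU x hx1)
  have hpow : ‖x‖ ^ ((d : ℝ) + β) * ‖x‖ ^ (2 - (d : ℝ) - α) = ‖x‖ ^ (2 + β - α) := by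
    rw [← Real.rpow_add hr]
    ring_nf
  calc ⟪x, Real.exp (U x) • fieldB d α x⟫ + q * rhoA d α x * Real.exp (U x) * ‖x‖ ^ (2 - α)
      = Real.exp (U x) * (⟪x, fieldB d α x⟫ + q * rhoA d α x * ‖x‖ ^ (2 - α)) := by
        rw [real_inner_smul_right]
        ring
    _ ≤ Real.exp (U x) * (-(κ₁ / 2) * ‖x‖ ^ (2 - (d : ℝ) - α)) := by
        gcongr
        linarith
    _ ≤ ‖x‖ ^ ((d : ℝ) + β) / Real.exp C₀ * (-(κ₁ / 2) * ‖x‖ ^ (2 - (d : ℝ) - α)) :=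
        mul_le_mul_of_nonpos_right hexp (by
          have := Real.rpow_pos_of_pos hr (2 - (d : ℝ) - α)
          nlinarith)
    _ = -(κ₁ / (2 * Real.exp C₀)) * ‖x‖ ^ (2 + β - α) := by
        rw [← hpow]
        field_simp

/-- Under the heavy-tail condition `U(x) ≥ (d+β)log|x| - C₀` for
`|x| ≥ 1` and the drift bound `⟨x, B(x)⟩ ≤ -κ₁|x|^{2-d-α}` for `|x| > 1`, the coefficient
`b(x) = B(x)e^{U(x)}` satisfies, for every `q > 0` and `|x| ≥ max((2q/κ₁)^{1/α}, 1)`: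
`⟨x, b(x)⟩ + q ρ_α(x) e^{U(x)} |x|^{2-α} ≤ -(κ₁/(2e^{C₀})) |x|^{2+β-α}`. -/
theorem stmt_18 (d : ℕ) (hd : 1 ≤ d) (α β C₀ κ₁ : ℝ)
    (hα : α ∈ Set.Ioo (0 : ℝ) 2) (hβ : 0 < β) (hC₀ : 0 < C₀) (hκ₁ : 0 < κ₁)
    (U : EuclideanSpace ℝ (Fin d) → ℝ)
    (hU : ∀ x : EuclideanSpace ℝ (Fin d), 1 ≤ ‖x‖ →
      ((d : ℝ) + β) * Real.log ‖x‖ - C₀ ≤ U x)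
    (hB : ∀ x : EuclideanSpace ℝ (Fin d), 1 < ‖x‖ →
      ⟪x, fieldB d α x⟫ ≤ -κ₁ * ‖x‖ ^ (2 - (d : ℝ) - α)) :
    ∀ q : ℝ, 0 < q → ∀ x : EuclideanSpace ℝ (Fin d),
      max ((2 * q / κ₁) ^ (1 / α)) 1 ≤ ‖x‖ →
      ⟪x, Real.exp (U x) • fieldB d α x⟫ + q * rhoA d α x * Real.exp (U x) * ‖x‖ ^ (2 - α)
        ≤ -(κ₁ / (2 * Real.exp C₀)) * ‖x‖ ^ (2 + β - α) :=
  stmt_18_general d hd α β C₀ κ₁ hα hκ₁ U hU hB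
end
end

section
/- Let d ≥ 1 and α ∈ (0,2). There exists a constant C > 0, depending only on d and α, such that for all x ∈ ℝ^d, writing R := |x|/2, one has ∫_{{y ∈ ℝ^d : |y| ≤ R}} |y|^{1−d−α} |ρ_α(x+y) − ρ_α(x−y)| dy ≤ C (1+|x|)^{−(d+α+1)} R^{2−α}. -/
open MeasureTheory Real

noncomputable section

open Metric Module

/-! On the ball `‖y‖ ≤ ‖x‖/2` both `x + y` and `x - y` have norm at least `‖x‖/2`. Since `ρ_α` is
`t ↦ (1+t)^{-(d+α)/2}` composed with `‖·‖²`, the mean value theorem in `t` together with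
`‖x+y‖² - ‖x-y‖² = 4⟪x, y⟫` gives `|ρ_α(x+y) - ρ_α(x-y)| ≲ (1+‖x‖)^{-(d+α+1)} ‖y‖`. The integrand is
therefore `≲ (1+‖x‖)^{-(d+α+1)} ‖y‖^{2-α-d}`, which is integrable near `0` because `2 - α > 0`,
and by scaling its integral over the ball of radius `R` is `R^{2-α}` times the one over the unit
ball. -/

theorem abs_one_add_rpow_neg_sub_le {s a t u : ℝ} (hs : 0 ≤ s) (ha : 0 ≤ a) (ht : a ≤ t)
    (hu : a ≤ u) : |(1 + t) ^ (-s) - (1 + u) ^ (-s)| ≤ s * (1 + a) ^ (-s - 1) * |t - u| := by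
  have hderiv : ∀ v ∈ Set.Ici a,
      HasDerivWithinAt (fun v => (1 + v) ^ (-s)) (-s * (1 + v) ^ (-s - 1)) (Set.Ici a) v := by
    intro v (hv : a ≤ v)
    have hv₁ : 1 + v ≠ 0 := by linarith
    exact ((hasDerivAt_rpow_const (Or.inl hv₁)).comp_const_add 1 v).hasDerivWithinAt
  have hbound : ∀ v ∈ Set.Ici a, ‖-s * (1 + v) ^ (-s - 1)‖ ≤ s * (1 + a) ^ (-s - 1) := by
    intro v (hv : a ≤ v)
    rw [norm_mul, norm_neg, norm_of_nonneg hs, norm_of_nonneg (rpow_nonneg (by linarith) _)]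
    exact mul_le_mul_of_nonneg_left
      (rpow_le_rpow_of_nonpos (by positivity) (by linarith) (by linarith)) hs
  exact (convex_Ici a).norm_image_sub_le_of_norm_hasDerivWithin_le hderiv hbound hu ht

theorem mul_one_add_sq_div_four_rpow_le {q r : ℝ} (hq : 0 ≤ q) (hr : 0 ≤ r) :
    r * (1 + r ^ 2 / 4) ^ (-(q / 2) - 1) ≤ 8 ^ (q / 2 + 1) * (1 + r) ^ (-(q + 1)) := by
  have hr1 : 0 < 1 + r := by linarith
  have hsq : (1 + r) ^ 2 / 8 ≤ 1 + r ^ 2 / 4 := by nlinarith [sq_nonneg (1 - r)]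
  calc r * (1 + r ^ 2 / 4) ^ (-(q / 2) - 1)
      ≤ (1 + r) * ((1 + r) ^ 2 / 8) ^ (-(q / 2) - 1) := by
        gcongr ?_ * ?_
        · linarith
        · exact rpow_le_rpow_of_nonpos (by positivity) hsq (by linarith)
    _ = 8 ^ (q / 2 + 1) * (1 + r) ^ (-(q + 1)) := by
        rw [div_rpow (by positivity) (by norm_num), ← rpow_natCast, ← rpow_mul hr1.le,
          div_eq_mul_inv, ← rpow_neg (by norm_num), show -(-(q / 2) - 1) = q / 2 + 1 by ring,
          show ((2 : ℕ) : ℝ) * (-(q / 2) - 1) = -(q + 1) - 1 by push_cast; ring,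
          rpow_sub_one hr1.ne']
        field_simp

theorem rpow_mul_self_le_rpow_add_one {r : ℝ} (hr : 0 ≤ r) (p : ℝ) : r ^ p * r ≤ r ^ (p + 1) := by
  simpa using le_rpow_add hr p 1

theorem sq_norm_div_four_le_norm_add_sq {E : Type*} [SeminormedAddCommGroup E] {x y : E}
    (h : ‖y‖ ≤ ‖x‖ / 2) : ‖x‖ ^ 2 / 4 ≤ ‖x + y‖ ^ 2 := by
  have htri := norm_sub_norm_le x (-y)
  rw [norm_neg, sub_neg_eq_add] at htri
  have : ‖x‖ / 2 ≤ ‖x + y‖ := by linarith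
  nlinarith [norm_nonneg x]

section InnerProductSpace

variable {E : Type*} [NormedAddCommGroup E] [InnerProductSpace ℝ E]

theorem abs_norm_add_sq_sub_norm_sub_sq_le (x y : E) :
    |‖x + y‖ ^ 2 - ‖x - y‖ ^ 2| ≤ 4 * ‖x‖ * ‖y‖ := by
  have hpolar : ‖x + y‖ ^ 2 - ‖x - y‖ ^ 2 = 4 * inner ℝ x y := by
    rw [norm_add_sq_real, norm_sub_sq_real]; ring
  rw [hpolar, abs_mul, abs_of_pos four_pos, mul_assoc]
  exact mul_le_mul_of_nonneg_left (abs_real_inner_le_norm x y) zero_le_four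

theorem exists_abs_one_add_norm_sq_rpow_sub_le {q : ℝ} (hq : 0 < q) :
    ∃ C > 0, ∀ x y : E, ‖y‖ ≤ ‖x‖ / 2 →
      |(1 + ‖x + y‖ ^ 2) ^ (-(q / 2)) - (1 + ‖x - y‖ ^ 2) ^ (-(q / 2))|
        ≤ C * (1 + ‖x‖) ^ (-(q + 1)) * ‖y‖ := by
  refine ⟨2 * q * 8 ^ (q / 2 + 1), by positivity, fun x y hy => ?_⟩
  have hplus := sq_norm_div_four_le_norm_add_sq hy
  have hminus : ‖x‖ ^ 2 / 4 ≤ ‖x - y‖ ^ 2 := by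
    rw [sub_eq_add_neg]; exact sq_norm_div_four_le_norm_add_sq (by rwa [norm_neg])
  calc |(1 + ‖x + y‖ ^ 2) ^ (-(q / 2)) - (1 + ‖x - y‖ ^ 2) ^ (-(q / 2))|
      ≤ q / 2 * (1 + ‖x‖ ^ 2 / 4) ^ (-(q / 2) - 1) * |‖x + y‖ ^ 2 - ‖x - y‖ ^ 2| :=
        abs_one_add_rpow_neg_sub_le (by positivity) (by positivity) hplus hminus
    _ ≤ q / 2 * (1 + ‖x‖ ^ 2 / 4) ^ (-(q / 2) - 1) * (4 * ‖x‖ * ‖y‖) := by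
        gcongr; exact abs_norm_add_sq_sub_norm_sub_sq_le x y
    _ = 2 * q * (‖x‖ * (1 + ‖x‖ ^ 2 / 4) ^ (-(q / 2) - 1)) * ‖y‖ := by ring
    _ ≤ 2 * q * (8 ^ (q / 2 + 1) * (1 + ‖x‖) ^ (-(q + 1))) * ‖y‖ := by
        gcongr 2 * q * ?_ * ‖y‖; exact mul_one_add_sq_div_four_rpow_le hq.le (norm_nonneg x)
    _ = 2 * q * 8 ^ (q / 2 + 1) * (1 + ‖x‖) ^ (-(q + 1)) * ‖y‖ := by ring

end InnerProductSpace

section AddHaar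

variable {E : Type*} [NormedAddCommGroup E] [NormedSpace ℝ E] [FiniteDimensional ℝ E]
  [MeasurableSpace E] [BorelSpace E] [Nontrivial E] (μ : Measure E) [μ.IsAddHaarMeasure]

theorem integrableOn_closedBall_norm_rpow {p : ℝ} (hp : -(finrank ℝ E : ℝ) < p) (R : ℝ) :
    IntegrableOn (fun y => ‖y‖ ^ p) (closedBall (0 : E) R) μ := by
  refine (integrableOn_ball_of_norm_le_rpow (C := 1) (α := -p) (r := R + 1)
    finrank_pos (by linarith) (ae_of_all _ fun y => ?_)
    (continuous_norm.measurable.pow_const p).aestronglyMeasurable).mono_set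
    (closedBall_subset_ball (lt_add_one R))
  simp [abs_of_nonneg (rpow_nonneg (norm_nonneg y) p)]

theorem setIntegral_closedBall_norm_rpow {p R : ℝ} (hp : -(finrank ℝ E : ℝ) < p) (hR : 0 ≤ R) :
    ∫ y in closedBall (0 : E) R, ‖y‖ ^ p ∂μ
      = R ^ (p + finrank ℝ E) * ∫ y in closedBall (0 : E) 1, ‖y‖ ^ p ∂μ := by
  rcases hR.eq_or_lt with rfl | hR
  · rw [closedBall_zero, Measure.restrict_singleton, measure_singleton, zero_smul,
      integral_zero_measure, zero_rpow (by linarith), zero_mul]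
  have hscale := Measure.setIntegral_comp_smul_of_pos μ (fun y => ‖y‖ ^ p) (closedBall 0 1) hR
  simp only [norm_smul, norm_of_nonneg hR.le, smul_unitClosedBall_of_nonneg hR.le,
    mul_rpow hR.le (norm_nonneg _), integral_const_mul, smul_eq_mul] at hscale
  rw [rpow_add hR, rpow_natCast, mul_comm (R ^ p), mul_assoc, hscale,
    mul_inv_cancel_left₀ (by positivity)]

theorem setIntegral_closedBall_le_of_le_mul_norm_rpow {f : E → ℝ} {p R M : ℝ}
    (hp : -(finrank ℝ E : ℝ) < p) (hR : 0 ≤ R) (hf₀ : ∀ y, 0 ≤ f y)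
    (hf : ∀ y ∈ closedBall (0 : E) R, f y ≤ M * ‖y‖ ^ p) :
    ∫ y in closedBall (0 : E) R, f y ∂μ
      ≤ M * R ^ (p + finrank ℝ E) * ∫ y in closedBall (0 : E) 1, ‖y‖ ^ p ∂μ := by
  calc ∫ y in closedBall (0 : E) R, f y ∂μ ≤ ∫ y in closedBall (0 : E) R, M * ‖y‖ ^ p ∂μ :=
        integral_mono_of_nonneg (ae_of_all _ hf₀)
          ((integrableOn_closedBall_norm_rpow μ hp R).const_mul M)
          (ae_restrict_of_forall_mem measurableSet_closedBall hf)
    _ = M * R ^ (p + finrank ℝ E) * ∫ y in closedBall (0 : E) 1, ‖y‖ ^ p ∂μ := by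
        rw [integral_const_mul, setIntegral_closedBall_norm_rpow μ hp hR, mul_assoc]

end AddHaar

theorem exists_rpow_mul_abs_rhoA_sub_le {d : ℕ} {α : ℝ} (hdα : 0 < d + α) (p : ℝ) :
    ∃ C > 0, ∀ x y : EuclideanSpace ℝ (Fin d), ‖y‖ ≤ ‖x‖ / 2 →
      ‖y‖ ^ p * |rhoA d α (x + y) - rhoA d α (x - y)|
        ≤ C * (1 + ‖x‖) ^ (-((d : ℝ) + α + 1)) * ‖y‖ ^ (p + 1) := by
  obtain ⟨C, hC, hρ⟩ := exists_abs_one_add_norm_sq_rpow_sub_le (E := EuclideanSpace ℝ (Fin d)) hdα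
  refine ⟨C, hC, fun x y hy => ?_⟩
  calc ‖y‖ ^ p * |rhoA d α (x + y) - rhoA d α (x - y)|
      ≤ ‖y‖ ^ p * (C * (1 + ‖x‖) ^ (-((d : ℝ) + α + 1)) * ‖y‖) := by
        gcongr; exact hρ x y hy
    _ ≤ C * (1 + ‖x‖) ^ (-((d : ℝ) + α + 1)) * ‖y‖ ^ (p + 1) := by
        rw [mul_left_comm]; gcongr; exact rpow_mul_self_le_rpow_add_one (norm_nonneg y) p

/-- There is `C > 0` depending only on `d, α` such that for all `x`,
with `R = |x|/2`:
`∫_{|y| ≤ R} |y|^{1-d-α} |ρ_α(x+y) - ρ_α(x-y)| dy ≤ C (1+|x|)^{-(d+α+1)} R^{2-α}`. -/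
theorem stmt_19 (d : ℕ) (hd : 1 ≤ d) (α : ℝ) (hα : α ∈ Set.Ioo (0 : ℝ) 2) :
    ∃ C > (0 : ℝ), ∀ x : EuclideanSpace ℝ (Fin d),
      (∫ y in {y : EuclideanSpace ℝ (Fin d) | ‖y‖ ≤ ‖x‖ / 2},
          ‖y‖ ^ (1 - (d : ℝ) - α) * |rhoA d α (x + y) - rhoA d α (x - y)|)
        ≤ C * (1 + ‖x‖) ^ (-((d : ℝ) + α + 1)) * (‖x‖ / 2) ^ (2 - α) := by
  obtain ⟨hα0, hα2⟩ := hα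
  have : Nontrivial (EuclideanSpace ℝ (Fin d)) :=
    nontrivial_of_finrank_pos (R := ℝ) (by rw [finrank_euclideanSpace_fin]; exact hd)
  have hp : -(finrank ℝ (EuclideanSpace ℝ (Fin d)) : ℝ) < 1 - d - α + 1 := by simp; linarith
  obtain ⟨C, hC, hρ⟩ := exists_rpow_mul_abs_rhoA_sub_le (by positivity) (1 - d - α)
  set I := ∫ y in closedBall (0 : EuclideanSpace ℝ (Fin d)) 1, ‖y‖ ^ (1 - (d : ℝ) - α + 1)
  have hI : 0 ≤ I := setIntegral_nonneg measurableSet_closedBall fun y _ => by positivity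
  refine ⟨C * I + 1, by positivity, fun x => ?_⟩
  have hball : {y | ‖y‖ ≤ ‖x‖ / 2} = closedBall (0 : EuclideanSpace ℝ (Fin d)) (‖x‖ / 2) := by
    ext; simp
  rw [hball]
  calc _ ≤ C * (1 + ‖x‖) ^ (-((d : ℝ) + α + 1))
          * (‖x‖ / 2) ^ (1 - (d : ℝ) - α + 1 + finrank ℝ (EuclideanSpace ℝ (Fin d))) * I :=
        setIntegral_closedBall_le_of_le_mul_norm_rpow volume hp (by positivity)
          (fun y => by positivity) fun y hy => hρ x y (by simpa using hy)
    _ = C * I * (1 + ‖x‖) ^ (-((d : ℝ) + α + 1)) * (‖x‖ / 2) ^ (2 - α) := by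
        rw [finrank_euclideanSpace_fin, show 1 - (d : ℝ) - α + 1 + d = 2 - α by ring]; ring
    _ ≤ (C * I + 1) * (1 + ‖x‖) ^ (-((d : ℝ) + α + 1)) * (‖x‖ / 2) ^ (2 - α) := by
        gcongr; linarith
end
end
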